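/- arXiv:1108.4947 — 7 statements merged into one kernel-verified Lean document; each statement's English description precedes it below -/
import Mathlib

section
/- Let G be a finite group acting additively on a finite additive abelian group X, and assume every G-orbit is closed under negation (x ∈ O ⇒ -x ∈ O). Let O_i and O_j be G-orbits, and let x, y, x', y' ∈ X be such that y - x and y' - x' lie in the same G-orbit. Then #{z ∈ X : z - x ∈ O_i and y - z ∈ O_j} = #{z ∈ X : z - x' ∈ O_i and y' - z ∈ O_j}. (This is the well-definedness of the intersection numbers in Theorem 2, which asserts that the orbit relations R_i = {(x,y) : y - x ∈ O_i} form a translation association scheme on X.) -/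
/-! If `g • (y - x) = y' - x'`, the affine map `z ↦ g • (z - x) + x'` is a bijection of `X`
sending `x, y` to `x', y'`. Since `g` acts additively it carries the differences `z - x` and
`y - z` to `g • (z - x)` and `g • (y - z)`, which lie in the same orbits, so it maps the set
counted on the left onto the set counted on the right. -/

open MulAction

theorem MulAction.smul_mem_orbit_iff {G X : Type*} [Group G] [MulAction G X] (g : G) {a b : X} :
    g • a ∈ orbit G b ↔ a ∈ orbit G b := by
  rw [← orbit_eq_iff, orbit_smul, orbit_eq_iff]

section IntersectionSet

variable {G X : Type*} [Group G] [MulAction G X] [AddCommGroup X]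

variable (G) in
def intersectionSet (u v x y : X) : Set X :=
  {z | z - x ∈ orbit G u ∧ y - z ∈ orbit G v}

theorem preimage_intersectionSet (hadd : ∀ (g : G) (x x' : X), g • (x + x') = g • x + g • x')
    {g : G} {x y x' y' : X} (hg : g • (y - x) = y' - x') (u v : X) :
    (fun z ↦ g • (z - x) + x') ⁻¹' intersectionSet G u v x' y' = intersectionSet G u v x y := by
  let gAdd : X →+ X := AddMonoidHom.mk' (g • ·) (hadd g)
  have hdiff : ∀ z, y' - (g • (z - x) + x') = g • (y - z) := fun z ↦ by
    rw [sub_add_eq_sub_sub, sub_right_comm, ← hg, ← sub_sub_sub_cancel_right y z x]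
    exact (map_sub gAdd (y - x) (z - x)).symm
  ext z
  simp only [intersectionSet, Set.mem_preimage, Set.mem_ofPred_eq, add_sub_cancel_right, hdiff,
    smul_mem_orbit_iff]

theorem ncard_intersectionSet_eq (hadd : ∀ (g : G) (x x' : X), g • (x + x') = g • x + g • x')
    {x y x' y' : X} (hsame : y' - x' ∈ orbit G (y - x)) (u v : X) :
    (intersectionSet G u v x y).ncard = (intersectionSet G u v x' y').ncard := by
  obtain ⟨g, hg⟩ := hsame
  let e : X ≃ X := (Equiv.subRight x).trans ((toPerm g).trans (Equiv.addRight x'))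
  rw [← preimage_intersectionSet hadd hg u v]
  exact Set.ncard_preimage_of_injective_subset_range (f := e) e.injective
    (e.surjective.range_eq ▸ Set.subset_univ _)

end IntersectionSet

theorem stmt1_general {G X : Type*} [Group G] [AddCommGroup X]
    [MulAction G X]
    (hadd : ∀ (g : G) (x x' : X), g • (x + x') = g • x + g • x')
    (u v : X) (x y x' y' : X)
    (hsame : y' - x' ∈ MulAction.orbit G (y - x)) :
    {z : X | z - x ∈ MulAction.orbit G u ∧ y - z ∈ MulAction.orbit G v}.ncard =
    {z : X | z - x' ∈ MulAction.orbit G u ∧ y' - z ∈ MulAction.orbit G v}.ncard :=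
  ncard_intersectionSet_eq hadd hsame u v

/-- Well-definedness of the intersection numbers of the orbit scheme.
If `G` acts additively on the finite abelian group `X` with every orbit closed under
negation, `O_i = orbit G u`, `O_j = orbit G v`, and `y - x`, `y' - x'` lie in the same
`G`-orbit, then
`#{z : z - x ∈ O_i ∧ y - z ∈ O_j} = #{z : z - x' ∈ O_i ∧ y' - z ∈ O_j}`. -/
theorem stmt1 {G X : Type*} [Group G] [Fintype G] [AddCommGroup X] [Fintype X]
    [MulAction G X]
    (hadd : ∀ (g : G) (x x' : X), g • (x + x') = g • x + g • x')
    (hneg : ∀ (x w : X), w ∈ MulAction.orbit G x → -w ∈ MulAction.orbit G x)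
    (u v : X) (x y x' y' : X)
    (hsame : y' - x' ∈ MulAction.orbit G (y - x)) :
    {z : X | z - x ∈ MulAction.orbit G u ∧ y - z ∈ MulAction.orbit G v}.ncard =
    {z : X | z - x' ∈ MulAction.orbit G u ∧ y' - z ∈ MulAction.orbit G v}.ncard :=
  stmt1_general hadd u v x y x' y' hsame
end

section
/- Let X be a finite additive abelian group with an inner product ⟨·,·⟩, and let X_0 = {0}, X_1, …, X_d be a partition of X with each X_i closed under negation. Define matrices E_j by (E_j)_{ab} = |X|^{-1} Σ_{x ∈ X_j} ⟨a,x⟩ · conj(⟨b,x⟩), and adjacency matrices A_i by (A_i)_{ab} = 1 if b - a ∈ X_i and 0 otherwise. Suppose that for each j the function y ↦ Σ_{x ∈ X_j} ⟨y,x⟩ is constant on each X_i, with value q_{ij} on X_i. Then E_j = |X|^{-1} Σ_{i=0}^{d} q_{ij} A_i for every j; in particular, each E_j lies in the ℂ-linear span of A_0, A_1, …, A_d. -/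
/-!
Since `⟨·,·⟩` is symmetric and additive in each variable, `x ↦ ⟨x, ·⟩` is an additive character
of the finite group `X`, so its values are roots of unity and `conj ⟨b,x⟩ = ⟨-b,x⟩`. Hence
`(E_j)_{ab} = |X|⁻¹ ∑_{x ∈ X_j} ⟨a - b, x⟩ = |X|⁻¹ q_{ij}` for the unique `i` with
`a - b ∈ X_i`, equivalently (by closure under negation) `b - a ∈ X_i`, which is exactly the
`(a,b)` entry of `|X|⁻¹ ∑_i q_{ij} A_i`.
-/

open ComplexConjugate

def AddChar.ofUnits {A M : Type*} [AddMonoid A] [Monoid M] (φ : A → Mˣ)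
    (hφ : ∀ y z, φ (y + z) = φ y * φ z) : AddChar A M where
  toFun y := φ y
  map_zero_eq_one' := by
    have h := hφ 0 0
    rw [add_zero] at h
    exact congrArg Units.val (left_eq_mul.mp h)
  map_add_eq_mul' y z := by rw [hφ, Units.val_mul]

theorem Units.coe_map_sub_eq_mul_conj {X : Type*} [AddCommGroup X] [Finite X] (φ : X → ℂˣ)
    (hφ : ∀ y z, φ (y + z) = φ y * φ z) (a b : X) :
    ((φ (a - b) : ℂˣ) : ℂ) = φ a * conj (φ b : ℂ) := by
  let ψ := AddChar.ofUnits φ hφ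
  change ψ (a - b) = ψ a * conj (ψ b)
  rw [sub_eq_add_neg, AddChar.map_add_eq_mul, AddChar.map_neg_eq_conj]

theorem Matrix.sum_smul_apply_of_mem_unique {X ι R : Type*} [Sub X] [DecidableEq X] [Fintype ι]
    [Semiring R] {Xs : ι → Finset X} {A : ι → Matrix X X R}
    (hA : ∀ i a b, A i a b = if b - a ∈ Xs i then 1 else 0) (c : ι → R)
    {a b : X} {i : ι} (hi : b - a ∈ Xs i) (huniq : ∀ i', b - a ∈ Xs i' → i' = i) :
    (∑ i', c i' • A i') a b = c i := by
  rw [Matrix.sum_apply, Finset.sum_eq_single_of_mem i (Finset.mem_univ i)]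
  · simp [hA, hi]
  · intro i' _ hne
    simp [hA, mt (huniq i') hne]

theorem stmt6_general {X : Type*} [AddCommGroup X] [Fintype X] [DecidableEq X]
    (f : X → X → ℂˣ)
    (hsymm : ∀ x y : X, f x y = f y x)
    (hmul : ∀ x y z : X, f x (y + z) = f x y * f x z)
    (d : ℕ) (Xs : Fin (d + 1) → Finset X)
    (hpart : ∀ x : X, ∃! i, x ∈ Xs i)
    (hclosed : ∀ i, ∀ x ∈ Xs i, -x ∈ Xs i)
    (E : Fin (d + 1) → Matrix X X ℂ)
    (hE : ∀ j a b, E j a b =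
      (Fintype.card X : ℂ)⁻¹ * ∑ x ∈ Xs j, (f a x : ℂ) * star ((f b x : ℂˣ) : ℂ))
    (A : Fin (d + 1) → Matrix X X ℂ)
    (hA : ∀ i a b, A i a b = if b - a ∈ Xs i then 1 else 0)
    (q : Fin (d + 1) → Fin (d + 1) → ℂ)
    (hq : ∀ i j, ∀ y ∈ Xs i, ∑ x ∈ Xs j, ((f y x : ℂˣ) : ℂ) = q i j) :
    ∀ j, E j = (Fintype.card X : ℂ)⁻¹ • ∑ i, q i j • A i ∧
      E j ∈ Submodule.span ℂ (Set.range A) := by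
  have hconj : ∀ a b x, (f a x : ℂ) * star ((f b x : ℂˣ) : ℂ) = f (a - b) x := fun a b x => by
    simp only [hsymm _ x]
    exact (Units.coe_map_sub_eq_mul_conj (f x) (hmul x) a b).symm
  intro j
  have hEq : E j = (Fintype.card X : ℂ)⁻¹ • ∑ i, q i j • A i := by
    ext a b
    obtain ⟨i, hi, huniq⟩ := hpart (b - a)
    have hab : a - b ∈ Xs i := neg_sub b a ▸ hclosed i _ hi
    rw [hE, Matrix.smul_apply, Matrix.sum_smul_apply_of_mem_unique hA _ hi huniq, smul_eq_mul,
      ← hq i j _ hab]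
    simp only [hconj]
  refine ⟨hEq, hEq ▸ Submodule.smul_mem _ _ (Submodule.sum_mem _ fun i _ =>
    Submodule.smul_mem _ _ (Submodule.subset_span ⟨i, rfl⟩))⟩

/-- With `X`, an inner product `f`, a partition `X_0 = {0}, X_1, …, X_d`
closed under negation, `E_j` and adjacency matrices `A_i` as described, if
`y ↦ ∑_{x ∈ X_j} ⟨y,x⟩` is constant with value `q_{ij}` on each `X_i`, then
`E_j = |X|⁻¹ ∑_i q_{ij} A_i`; in particular `E_j` lies in the span of the `A_i`. -/
theorem stmt6 {X : Type*} [AddCommGroup X] [Fintype X] [DecidableEq X]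
    (f : X → X → ℂˣ)
    (hsymm : ∀ x y : X, f x y = f y x)
    (hmul : ∀ x y z : X, f x (y + z) = f x y * f x z)
    (hnd : ∀ y z : X, (∀ x : X, f x y = f x z) → y = z)
    (d : ℕ) (Xs : Fin (d + 1) → Finset X)
    (hzero : Xs 0 = {0})
    (hne : ∀ i, (Xs i).Nonempty)
    (hpart : ∀ x : X, ∃! i, x ∈ Xs i)
    (hclosed : ∀ i, ∀ x ∈ Xs i, -x ∈ Xs i)
    (E : Fin (d + 1) → Matrix X X ℂ)
    (hE : ∀ j a b, E j a b =
      (Fintype.card X : ℂ)⁻¹ * ∑ x ∈ Xs j, (f a x : ℂ) * star ((f b x : ℂˣ) : ℂ))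
    (A : Fin (d + 1) → Matrix X X ℂ)
    (hA : ∀ i a b, A i a b = if b - a ∈ Xs i then 1 else 0)
    (q : Fin (d + 1) → Fin (d + 1) → ℂ)
    (hq : ∀ i j, ∀ y ∈ Xs i, ∑ x ∈ Xs j, ((f y x : ℂˣ) : ℂ) = q i j) :
    ∀ j, E j = (Fintype.card X : ℂ)⁻¹ • ∑ i, q i j • A i ∧
      E j ∈ Submodule.span ℂ (Set.range A) :=
  stmt6_general f hsymm hmul d Xs hpart hclosed E hE A hA q hq
end

section
/- Let q be a prime power and let X be the additive group of all Hermitian m×m matrices over F_{q²}, i.e., matrices A with *A = A, where (*A)_{ij} = (A_{ji})^q. Then for A, B ∈ X, rank(A) = rank(B) if and only if there exists α ∈ GL(m, q²) with B = *α A α. In other words, the orbits of the action of GL(m,q²) on X given by (α, A) ↦ *α A α are exactly the sets O_i = {A ∈ X : rank(A) = i} for i = 0, 1, …, m. -/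
/-!
Over a field with an involution `star` in which some trace `μ + star μ` is nonzero, a nonzero
Hermitian matrix acquires a nonzero diagonal entry after a transvection, and a Schur complement
step splits that entry off; by induction every Hermitian matrix is `*`-congruent (`Pᴴ * A * P`
with `P` invertible) to a diagonal one. If every nonzero self-adjoint element is a norm
`star e * e`, rescaling makes the diagonal entries `0` or `1`, and two such forms of equal rank
differ by a permutation of the coordinates. For `F_{q²}` with `star x = x ^ q` both conditions
hold: `X + X ^ q` has fewer than `q²` roots, and `x ↦ x ^ (q + 1)` maps the cyclic group
`F_{q²}ˣ` onto its subgroup of order `q - 1`, the nonzero fixed points of `x ↦ x ^ q`.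
-/

namespace Matrix

theorem conjTranspose_transvection {n R : Type*} [DecidableEq n] [CommRing R] [StarRing R]
    (i j : n) (c : R) : (transvection i j c)ᴴ = transvection j i (star c) := by
  simp [transvection, conjTranspose_single]

variable {l n R : Type*} [Fintype n] [DecidableEq n] [CommRing R] [StarRing R]

def StarCongr (A B : Matrix n n R) : Prop :=
  ∃ P : Matrix n n R, IsUnit P ∧ B = Pᴴ * A * P

namespace StarCongr

@[refl] theorem refl (A : Matrix n n R) : StarCongr A A :=
  ⟨1, isUnit_one, by simp⟩

theorem trans {A B C : Matrix n n R} (hAB : StarCongr A B) (hBC : StarCongr B C) :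
    StarCongr A C := by
  obtain ⟨P, hP, rfl⟩ := hAB
  obtain ⟨Q, hQ, rfl⟩ := hBC
  exact ⟨P * Q, hP.mul hQ, by simp only [conjTranspose_mul, Matrix.mul_assoc]⟩

theorem symm {A B : Matrix n n R} (h : StarCongr A B) : StarCongr B A := by
  obtain ⟨P, hP, rfl⟩ := h
  obtain ⟨u, rfl⟩ := hP
  refine ⟨↑u⁻¹, u⁻¹.isUnit, ?_⟩
  have hu : (↑u⁻¹ : Matrix n n R)ᴴ * (↑u)ᴴ = 1 := by
    rw [← conjTranspose_mul, Units.mul_inv, conjTranspose_one]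
  calc A = ((↑u⁻¹ : Matrix n n R)ᴴ * (↑u)ᴴ) * A * (↑u * ↑u⁻¹) := by
        rw [hu, Units.mul_inv, Matrix.one_mul, Matrix.mul_one]
    _ = _ := by simp only [Matrix.mul_assoc]

theorem rank_eq {A B : Matrix n n R} (h : StarCongr A B) : A.rank = B.rank := by
  obtain ⟨P, hP, rfl⟩ := h
  rw [rank_mul_eq_left_of_isUnit_det _ _ ((isUnit_iff_isUnit_det P).mp hP),
    rank_mul_eq_right_of_isUnit_det _ _
      ((isUnit_iff_isUnit_det _).mp ((isUnit_conjTranspose P).mpr hP))]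

theorem isHermitian {A B : Matrix n n R} (h : StarCongr A B) (hA : A.IsHermitian) :
    B.IsHermitian := by
  obtain ⟨P, -, rfl⟩ := h
  exact isHermitian_conjTranspose_mul_mul P hA

variable [Fintype l] [DecidableEq l]

theorem submatrix {A B : Matrix n n R} (h : StarCongr A B) (e : l ≃ n) :
    StarCongr (A.submatrix e e) (B.submatrix e e) := by
  obtain ⟨P, hP, rfl⟩ := h
  refine ⟨P.submatrix e e, ?_, ?_⟩
  · rwa [isUnit_iff_isUnit_det, det_submatrix_equiv_self, ← isUnit_iff_isUnit_det]
  · rw [conjTranspose_submatrix, submatrix_mul_equiv, submatrix_mul_equiv]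

theorem fromBlocks_zero {A A' : Matrix l l R} {D D' : Matrix n n R} (hA : StarCongr A A')
    (hD : StarCongr D D') : StarCongr (fromBlocks A 0 0 D) (fromBlocks A' 0 0 D') := by
  obtain ⟨P, hP, rfl⟩ := hA
  obtain ⟨Q, hQ, rfl⟩ := hD
  refine ⟨fromBlocks P 0 0 Q, ?_, ?_⟩
  · rw [isUnit_iff_isUnit_det, det_fromBlocks_zero₂₁]
    exact ((isUnit_iff_isUnit_det P).mp hP).mul ((isUnit_iff_isUnit_det Q).mp hQ)
  · simp [fromBlocks_conjTranspose, fromBlocks_multiply]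

end StarCongr

theorem starCongr_submatrix_self (A : Matrix n n R) (e : n ≃ n) :
    StarCongr A (A.submatrix e e) := by
  have hP : (e.symm.toPEquiv.toMatrix : Matrix n n R)ᴴ = e.toPEquiv.toMatrix := by
    ext i j
    simp [PEquiv.toMatrix_apply, apply_ite star, Equiv.eq_symm_apply, eq_comm]
  refine ⟨e.symm.toPEquiv.toMatrix, ?_, ?_⟩
  · refine (isUnit_iff_isUnit_det _).mpr
      (isUnit_det_of_right_inverse (B := e.toPEquiv.toMatrix) ?_)
    rw [← PEquiv.toMatrix_trans, ← Equiv.toPEquiv_trans, Equiv.symm_trans_self,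
      Equiv.toPEquiv_refl, PEquiv.toMatrix_refl]
  · rw [hP, PEquiv.toMatrix_toPEquiv_mul, PEquiv.mul_toMatrix_toPEquiv]
    simp

theorem starCongr_fromBlocks_schur {o : Type*} [Fintype o] [DecidableEq o]
    [Fintype l] [DecidableEq l] {D : Matrix l l R} {B : Matrix l o R} {a : Matrix o o R}
    (ha : a.IsHermitian) (hu : IsUnit a) :
    StarCongr (fromBlocks D B Bᴴ a) (fromBlocks (D - B * a⁻¹ * Bᴴ) 0 0 a) := by
  have := a.invertibleOfIsUnitDet ((isUnit_iff_isUnit_det a).mp hu)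
  refine StarCongr.symm ⟨fromBlocks 1 0 (a⁻¹ * Bᴴ) 1, ?_, ?_⟩
  · rw [isUnit_iff_isUnit_det, det_fromBlocks_zero₁₂, det_one, det_one, mul_one]
    exact isUnit_one
  · rw [fromBlocks_eq_of_invertible₂₂, fromBlocks_conjTranspose, invOf_eq_nonsing_inv]
    simp [conjTranspose_mul, conjTranspose_nonsing_inv, ha.eq]

section Field

variable {K : Type*} [Field K] [StarRing K]

theorem IsHermitian.exists_starCongr_apply_self_ne_zero {A : Matrix n n K}
    (hA : A.IsHermitian) (hA0 : A ≠ 0) (htrace : ∃ μ : K, μ + star μ ≠ 0) :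
    ∃ A' i, StarCongr A A' ∧ A' i i ≠ 0 := by
  by_cases hdiag : ∃ i, A i i ≠ 0
  · obtain ⟨i, hi⟩ := hdiag
    exact ⟨A, i, .refl A, hi⟩
  push Not at hdiag
  obtain ⟨i, j, hij⟩ : ∃ i j, A i j ≠ 0 := by
    by_contra! h
    exact hA0 (Matrix.ext h)
  have hne : j ≠ i := by rintro rfl; exact hij (hdiag j)
  obtain ⟨μ, hμ⟩ := htrace
  set c := μ / A i j
  have hc : c * A i j = μ := div_mul_cancel₀ μ hij
  -- the `(i, i)` entry becomes `c * A i j + star (c * A i j) = μ + star μ`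
  refine ⟨(transvection j i c)ᴴ * A * transvection j i c, i, ⟨_, ?_, rfl⟩, ?_⟩
  · rw [isUnit_iff_isUnit_det, det_transvection_of_ne _ _ hne]
    exact isUnit_one
  · rw [conjTranspose_transvection, mul_transvection_apply_same, transvection_mul_apply_same,
      transvection_mul_apply_same, hdiag i, hdiag j, ← hA.apply j i, ← star_mul', hc]
    simpa [hc, add_comm] using hμ

theorem IsHermitian.exists_starCongr_fromBlocks_unit [Fintype l] [DecidableEq l]
    {M : Matrix (l ⊕ Unit) (l ⊕ Unit) K} (hM : M.IsHermitian)
    (hd : M (.inr ()) (.inr ()) ≠ 0) :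
    ∃ S : Matrix l l K, S.IsHermitian ∧
      StarCongr M (Matrix.fromBlocks S 0 0 (diagonal fun _ => M (.inr ()) (.inr ()))) := by
  have ha : M.toBlocks₂₂ = diagonal fun _ => M (.inr ()) (.inr ()) := by
    ext ⟨⟩ ⟨⟩; rfl
  obtain ⟨-, hBC, -, haH⟩ := isHermitian_fromBlocks_iff.mp (M.fromBlocks_toBlocks.symm ▸ hM)
  have hu : IsUnit M.toBlocks₂₂ := by
    rw [isUnit_iff_isUnit_det, ha, det_diagonal, Finset.prod_const, isUnit_iff_ne_zero]
    exact pow_ne_zero _ hd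
  have hMS := starCongr_fromBlocks_schur (D := M.toBlocks₁₁) (B := M.toBlocks₁₂) haH hu
  rw [hBC, fromBlocks_toBlocks, ha] at hMS
  exact ⟨_, (isHermitian_fromBlocks_iff.mp (hMS.isHermitian hM)).1, hMS⟩

theorem IsHermitian.exists_starCongr_diagonal (htrace : ∃ μ : K, μ + star μ ≠ 0)
    {A : Matrix n n K} (hA : A.IsHermitian) : ∃ w, StarCongr A (diagonal w) := by
  suffices h : ∀ m (A : Matrix (Fin m) (Fin m) K), A.IsHermitian → ∃ w, StarCongr A (diagonal w) by
    let e := Fintype.equivFin n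
    obtain ⟨w, hw⟩ := h _ _ (hA.submatrix e.symm)
    refine ⟨w ∘ e, ?_⟩
    simpa [submatrix_submatrix, submatrix_diagonal_equiv] using hw.submatrix e
  intro m
  induction m with
  | zero => exact fun A _ => ⟨0, Subsingleton.elim A (diagonal 0) ▸ .refl A⟩
  | succ m ih =>
    intro A hA
    by_cases hA0 : A = 0
    · exact ⟨fun _ => 0, by rw [hA0, diagonal_zero]⟩
    obtain ⟨A₁, i, hAA₁, hi⟩ := hA.exists_starCongr_apply_self_ne_zero hA0 htrace
    let e : Fin m ⊕ Unit ≃ Fin (m + 1) :=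
      ((finSuccEquiv' i).trans (Equiv.optionEquivSumPUnit (Fin m))).symm
    have he : e (.inr ()) = i := by simp [e]
    obtain ⟨S, hS, hMS⟩ := ((hAA₁.isHermitian hA).submatrix e).exists_starCongr_fromBlocks_unit
      (by simpa [he] using hi)
    obtain ⟨w, hSw⟩ := ih S hS
    have h := (hMS.trans (hSw.fromBlocks_zero (.refl _))).submatrix e.symm
    rw [submatrix_submatrix, e.self_comp_symm, submatrix_id_id, fromBlocks_diagonal,
      submatrix_diagonal_equiv] at h
    exact ⟨_, hAA₁.trans h⟩

variable [DecidableEq K]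

theorem starCongr_diagonal_ite_eq_zero
    (hnorm : ∀ c : K, c ≠ 0 → star c = c → ∃ e, star e * e = c)
    {w : n → K} (hw : ∀ i, star (w i) = w i) :
    StarCongr (diagonal w) (diagonal fun i => if w i = 0 then 0 else 1) := by
  have hscale : ∀ i, ∃ d : K, d ≠ 0 ∧ star d * w i * d = if w i = 0 then 0 else 1 := by
    intro i
    by_cases hwi : w i = 0
    · exact ⟨1, one_ne_zero, by simp [hwi]⟩
    obtain ⟨e, he⟩ := hnorm (w i) hwi (hw i)
    have he0 : e ≠ 0 := by rintro rfl; simp [eq_comm, hwi] at he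
    refine ⟨e⁻¹, inv_ne_zero he0, ?_⟩
    rw [if_neg hwi, ← he, star_inv₀]
    field_simp [he0, (star_ne_zero (R := K)).mpr he0]
  choose d hd0 hd using hscale
  refine ⟨diagonal d, ?_, ?_⟩
  · rw [isUnit_iff_isUnit_det, det_diagonal, isUnit_iff_ne_zero, Finset.prod_ne_zero_iff]
    exact fun i _ => hd0 i
  · simp only [diagonal_conjTranspose, diagonal_mul_diagonal, Pi.star_apply, hd]

theorem starCongr_diagonal_ite_eq_zero_of_card_eq {w v : n → K}
    (h : Fintype.card {i // v i ≠ 0} = Fintype.card {i // w i ≠ 0}) :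
    StarCongr (diagonal fun i => if w i = 0 then (0 : K) else 1)
      (diagonal fun i => if v i = 0 then (0 : K) else 1) := by
  let π := (Fintype.equivOfCardEq h).extendSubtype
  have hπ : ∀ i, w (π i) = 0 ↔ v i = 0 := fun i => by
    by_cases hvi : v i = 0
    · simpa [hvi] using (Fintype.equivOfCardEq h).extendSubtype_not_mem i (not_not.mpr hvi)
    · simpa [hvi] using (Fintype.equivOfCardEq h).extendSubtype_mem i hvi
  have h := starCongr_submatrix_self (diagonal fun i => if w i = 0 then (0 : K) else 1) π
  simpa only [submatrix_diagonal_equiv, Function.comp_def, hπ] using h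

theorem IsHermitian.rank_eq_iff_starCongr (htrace : ∃ μ : K, μ + star μ ≠ 0)
    (hnorm : ∀ c : K, c ≠ 0 → star c = c → ∃ e, star e * e = c)
    {A B : Matrix n n K} (hA : A.IsHermitian) (hB : B.IsHermitian) :
    A.rank = B.rank ↔ StarCongr A B := by
  refine ⟨fun hrank => ?_, StarCongr.rank_eq⟩
  obtain ⟨w, hAw⟩ := hA.exists_starCongr_diagonal htrace
  obtain ⟨v, hBv⟩ := hB.exists_starCongr_diagonal htrace
  have hw : ∀ i, star (w i) = w i := fun i => by simpa using (hAw.isHermitian hA).apply i i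
  have hv : ∀ i, star (v i) = v i := fun i => by simpa using (hBv.isHermitian hB).apply i i
  have hcard : Fintype.card {i // v i ≠ 0} = Fintype.card {i // w i ≠ 0} := by
    rw [← rank_diagonal, ← rank_diagonal, ← hAw.rank_eq, ← hBv.rank_eq, hrank]
  exact (hAw.trans (starCongr_diagonal_ite_eq_zero hnorm hw)).trans
    ((starCongr_diagonal_ite_eq_zero_of_card_eq hcard).trans
      (hBv.trans (starCongr_diagonal_ite_eq_zero hnorm hv)).symm)

end Field

end Matrix

namespace FiniteField

variable {F : Type*} [Field F] [Fintype F]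

abbrev conjugationStarRing (p k : ℕ) [ExpChar F p] (hcard : Fintype.card F = (p ^ k) ^ 2) :
    StarRing F where
  star := iterateFrobenius F p k
  star_involutive x := by
    rw [iterateFrobenius_def, iterateFrobenius_def, ← pow_mul, ← sq, ← hcard, pow_card]
  star_mul x y := by rw [map_mul, mul_comm]
  star_add := map_add _

open Polynomial in
theorem exists_add_pow_ne_zero {q : ℕ} (hq : q ≠ 1) (hcard : q < Fintype.card F) :
    ∃ μ : F, μ + μ ^ q ≠ 0 := by
  by_contra! h
  have hX : (X + X ^ q : F[X]) = 0 := by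
    refine eq_zero_of_natDegree_lt_card_of_eval_eq_zero _ Function.injective_id
      (by simpa using h) ((natDegree_add_le _ _).trans_lt (max_lt ?_ ?_))
    · simpa using Fintype.one_lt_card
    · simpa using hcard
  simpa [coeff_X, coeff_X_pow, Ne.symm hq] using congr_arg (coeff · 1) hX

theorem exists_pow_succ_eq_of_pow_eq_self {q : ℕ} (hcard : Fintype.card F = q ^ 2) {c : F}
    (hc : c ≠ 0) (hfix : c ^ q = c) : ∃ e : F, e ^ (q + 1) = c := by
  have hq : 1 < q := by
    have := hcard ▸ (Fintype.one_lt_card : 1 < Fintype.card F)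
    by_contra! h
    interval_cases q <;> simp_all
  obtain ⟨g, hg⟩ := IsCyclic.exists_generator (α := Fˣ)
  have hord : orderOf g = (q + 1) * (q - 1) := by
    rw [orderOf_eq_card_of_forall_mem_zpowers hg, Nat.card_units, Nat.card_eq_fintype_card,
      hcard]
    simpa using Nat.sq_sub_sq q 1
  obtain ⟨t, ht⟩ : ∃ t : ℕ, g ^ t = Units.mk0 c hc := mem_powers_iff_mem_zpowers.mpr (hg _)
  have hc1 : c ^ (q - 1) = 1 := by
    refine mul_right_cancel₀ hc ?_
    rw [← pow_succ, Nat.sub_add_cancel hq.le, hfix, one_mul]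
  obtain ⟨s, rfl⟩ : q + 1 ∣ t := by
    refine Nat.dvd_of_mul_dvd_mul_right (Nat.sub_pos_of_lt hq) ?_
    rw [← hord, orderOf_dvd_iff_pow_eq_one, pow_mul, ht, Units.ext_iff]
    simpa using hc1
  refine ⟨g ^ s, ?_⟩
  simpa [← pow_mul, mul_comm] using congr_arg Units.val ht

end FiniteField

/-- Let `q = p^k` be a prime power and `F` a field with `q²` elements,
with conjugation `x ↦ x^q`. For Hermitian `m×m` matrices `A, B` over `F`
(`(A_{ji})^q = A_{ij}`), `rank A = rank B` iff there is `α ∈ GL(m,q²)` with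
`B = *α A α`, where `(*α)_{ij} = (α_{ji})^q`; i.e., the orbits of the
`GL(m,q²)`-action `(α, A) ↦ *α A α` on Hermitian matrices are the fixed-rank sets. -/
theorem stmt14 {F : Type*} [Field F] [Fintype F] [DecidableEq F]
    (p k q : ℕ) (hp : p.Prime) (hk : 0 < k) (hq : q = p ^ k)
    (hcard : Fintype.card F = q ^ 2)
    (m : ℕ) (A B : Matrix (Fin m) (Fin m) F)
    (hA : ∀ i j, (A j i) ^ q = A i j) (hB : ∀ i j, (B j i) ^ q = B i j) :
    A.rank = B.rank ↔
      ∃ α : Matrix (Fin m) (Fin m) F, IsUnit α ∧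
        B = (Matrix.of fun i j => (α j i) ^ q) * A * α := by
  subst hq
  have := Fact.mk hp
  have : CharP F p := charP_of_card_eq_prime_pow (f := k * 2) (by rw [hcard, pow_mul])
  let := FiniteField.conjugationStarRing p k hcard
  have hq : 1 < p ^ k := Nat.one_lt_pow hk.ne' hp.one_lt
  have htrace : ∃ μ : F, μ + star μ ≠ 0 :=
    FiniteField.exists_add_pow_ne_zero hq.ne' (hcard ▸ lt_self_pow₀ hq one_lt_two)
  have hnorm : ∀ c : F, c ≠ 0 → star c = c → ∃ e, star e * e = c := fun c hc hfix => by
    obtain ⟨e, he⟩ := FiniteField.exists_pow_succ_eq_of_pow_eq_self hcard hc hfix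
    exact ⟨e, by rw [← he, pow_succ]; rfl⟩
  -- for this star structure, `Matrix.of fun i j => α j i ^ q` is `αᴴ` by definition
  exact Matrix.IsHermitian.rank_eq_iff_starCongr htrace hnorm (Matrix.ext hA) (Matrix.ext hB)
end

section
/- Let F_q be a finite field and n a positive integer. A linear automorphism φ of F_q^n preserves the Hamming weight (i.e., w_H(φu) = w_H(u) for all u ∈ F_q^n) if and only if φ is a monomial transformation, that is, there exist a permutation σ ∈ S_n and α = (α_1, …, α_n) ∈ (F_qˣ)^n such that φ(x_1, …, x_n) = (α_1 x_{σ^{-1}(1)}, …, α_n x_{σ^{-1}(n)}) for all x ∈ F_q^n. Consequently, the orbits of the group Aut(F_q^n, w_H) of Hamming-weight-preserving linear automorphisms acting on F_q^n are exactly the spheres O_i = {x ∈ F_q^n : w_H(x) = i}, i = 0, 1, …, n. -/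
/-!
A weight-preserving automorphism sends each standard basis vector `e_j` (weight 1) to a vector of
weight 1, i.e. to `c_j e_{τ j}` with `c_j ≠ 0`. Applying the same to the inverse shows that `τ` is
onto, hence a permutation, and a linear map is determined by its values on the basis. Conversely,
two vectors of equal weight are related by a monomial map: permute one support onto the other and
rescale coordinate by coordinate.
-/

def hammingWt {F : Type*} [DecidableEq F] [Zero F] {n : ℕ} (x : Fin n → F) : ℕ :=
  (Finset.univ.filter fun i => x i ≠ 0).card

section Weight

variable {R : Type*} [Zero R] [DecidableEq R] {n : ℕ}

lemma hammingWt_eq_card_subtype (x : Fin n → R) : hammingWt x = Fintype.card {i // x i ≠ 0} :=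
  (Fintype.card_subtype _).symm

lemma hammingWt_single (j : Fin n) {c : R} (hc : c ≠ 0) : hammingWt (Pi.single j c) = 1 := by
  rw [hammingWt, Finset.card_eq_one]
  refine ⟨j, Finset.ext fun i => ?_⟩
  rcases eq_or_ne i j with rfl | hij <;> simp [Pi.single_apply, *]

lemma exists_eq_single_of_hammingWt_eq_one {v : Fin n → R} (hv : hammingWt v = 1) :
    ∃ i c, c ≠ 0 ∧ v = Pi.single i c := by
  obtain ⟨i, hi⟩ := Finset.card_eq_one.mp hv
  have hsupp : ∀ k, v k ≠ 0 ↔ k = i := fun k => by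
    simpa using Finset.ext_iff.mp hi k
  refine ⟨i, v i, (hsupp i).mpr rfl, funext fun k => ?_⟩
  rcases eq_or_ne k i with rfl | hki
  · simp
  · simpa [hki] using mt (hsupp k).mp hki

lemma exists_perm_ne_zero_iff_of_hammingWt_eq {x y : Fin n → R} (h : hammingWt x = hammingWt y) :
    ∃ σ : Equiv.Perm (Fin n), ∀ j, x j ≠ 0 ↔ y (σ j) ≠ 0 := by
  rw [hammingWt_eq_card_subtype, hammingWt_eq_card_subtype] at h
  let e := Fintype.equivOfCardEq h
  refine ⟨e.extendSubtype, fun j => ?_⟩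
  by_cases hx : x j ≠ 0
  · exact iff_of_true hx (e.extendSubtype_mem j hx)
  · exact iff_of_false hx (e.extendSubtype_not_mem j hx)

end Weight

section Monomial

variable {R : Type*} [CommSemiring R] {n : ℕ}

def monomialEquiv (σ : Equiv.Perm (Fin n)) (α : Fin n → Rˣ) : (Fin n → R) ≃ₗ[R] (Fin n → R) where
  toFun x i := α i * x (σ⁻¹ i)
  invFun y j := ↑(α (σ j))⁻¹ * y (σ j)
  map_add' x y := funext fun i => mul_add _ _ _
  map_smul' c x := funext fun i => by simp only [Pi.smul_apply, smul_eq_mul, RingHom.id_apply]; ring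
  left_inv x := funext fun j => by simp
  right_inv y := funext fun i => by simp

@[simp]
lemma monomialEquiv_apply (σ : Equiv.Perm (Fin n)) (α : Fin n → Rˣ) (x : Fin n → R) (i : Fin n) :
    monomialEquiv σ α x i = α i * x (σ⁻¹ i) :=
  rfl

lemma monomialEquiv_single (σ : Equiv.Perm (Fin n)) (α : Fin n → Rˣ) (j : Fin n) (c : R) :
    monomialEquiv σ α (Pi.single j c) = Pi.single (σ j) (α (σ j) * c) := by
  ext i
  rcases eq_or_ne i (σ j) with rfl | hi
  · simp
  · simp [hi, Equiv.symm_apply_eq]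

lemma hammingWt_monomialEquiv [DecidableEq R] (σ : Equiv.Perm (Fin n)) (α : Fin n → Rˣ)
    (x : Fin n → R) : hammingWt (monomialEquiv σ α x) = hammingWt x := by
  rw [hammingWt_eq_card_subtype, hammingWt_eq_card_subtype]
  refine Fintype.card_congr (σ.symm.subtypeEquiv fun i => ?_)
  simp [Units.mul_right_eq_zero]

end Monomial

section Classification

variable {F : Type*} [Field F] [DecidableEq F] {n : ℕ}

lemma eq_monomialEquiv_of_hammingWt_map (φ : (Fin n → F) ≃ₗ[F] (Fin n → F))
    (hφ : ∀ u, hammingWt (φ u) = hammingWt u) :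
    ∃ (σ : Equiv.Perm (Fin n)) (α : Fin n → Fˣ), φ = monomialEquiv σ α := by
  have image_single (ψ : (Fin n → F) ≃ₗ[F] (Fin n → F)) (hψ : ∀ u, hammingWt (ψ u) = hammingWt u)
      (j : Fin n) : ∃ i c, c ≠ 0 ∧ ψ (Pi.single j 1) = Pi.single i c :=
    exists_eq_single_of_hammingWt_eq_one (by rw [hψ, hammingWt_single j one_ne_zero])
  choose τ c hc hφτ using image_single φ hφ
  have hτ : Function.Surjective τ := fun i => by
    obtain ⟨j, d, -, hj⟩ := image_single φ.symm (fun u => by rw [← hφ, φ.apply_symm_apply]) i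
    have hi : Pi.single i 1 = d • Pi.single (τ j) (c j) := calc
      Pi.single i 1 = φ (φ.symm (Pi.single i 1)) := (φ.apply_symm_apply _).symm
      _ = φ (d • Pi.single j 1) := by rw [hj, ← Pi.single_smul', smul_eq_mul, mul_one]
      _ = d • Pi.single (τ j) (c j) := by rw [map_smul, hφτ]
    refine ⟨j, by_contra fun hji => ?_⟩
    simpa [Ne.symm hji] using congrFun hi i
  let σ := Equiv.ofBijective τ hτ.bijective_of_finite
  refine ⟨σ, fun i => Units.mk0 (c (σ.symm i)) (hc _), ?_⟩
  refine (Pi.basisFun F (Fin n)).ext' fun j => ?_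
  simp [monomialEquiv_single, hφτ, σ]

lemma exists_monomialEquiv_apply_eq {x y : Fin n → F} (h : hammingWt x = hammingWt y) :
    ∃ (σ : Equiv.Perm (Fin n)) (α : Fin n → Fˣ), monomialEquiv σ α x = y := by
  obtain ⟨σ, hσ⟩ := exists_perm_ne_zero_iff_of_hammingWt_eq h
  have hsupp (i : Fin n) : y i ≠ 0 ↔ x (σ⁻¹ i) ≠ 0 := by
    simpa using (hσ (σ⁻¹ i)).symm
  refine ⟨σ, fun i => if hy : y i = 0 then 1 else
    Units.mk0 (y i / x (σ⁻¹ i)) (div_ne_zero hy ((hsupp i).mp hy)), funext fun i => ?_⟩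
  by_cases hy : y i = 0
  · simpa [hy] using hsupp i
  · simpa [hy] using div_mul_cancel₀ _ ((hsupp i).mp hy)

end Classification

theorem stmt16_general {F : Type*} [Field F] [DecidableEq F] (n : ℕ) :
    (∀ φ : (Fin n → F) ≃ₗ[F] (Fin n → F),
      (∀ u : Fin n → F, hammingWt (φ u) = hammingWt u) ↔
        ∃ (σ : Equiv.Perm (Fin n)) (α : Fin n → Fˣ),
          ∀ (x : Fin n → F) (i : Fin n), φ x i = (α i : F) * x (σ⁻¹ i)) ∧
    (∀ x y : Fin n → F,
      hammingWt x = hammingWt y ↔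
        ∃ φ : (Fin n → F) ≃ₗ[F] (Fin n → F),
          (∀ u : Fin n → F, hammingWt (φ u) = hammingWt u) ∧ φ x = y) := by
  refine ⟨fun φ => ⟨fun hφ => ?_, fun ⟨σ, α, hφ⟩ u => ?_⟩, fun x y => ⟨fun h => ?_, ?_⟩⟩
  · obtain ⟨σ, α, rfl⟩ := eq_monomialEquiv_of_hammingWt_map φ hφ
    exact ⟨σ, α, monomialEquiv_apply σ α⟩
  · rw [show φ u = monomialEquiv σ α u from funext (hφ u)]
    exact hammingWt_monomialEquiv σ α u
  · obtain ⟨σ, α, hxy⟩ := exists_monomialEquiv_apply_eq h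
    exact ⟨monomialEquiv σ α, hammingWt_monomialEquiv σ α, hxy⟩
  · rintro ⟨φ, hφ, rfl⟩
    exact (hφ x).symm

/-- A linear automorphism `φ` of `F_q^n` preserves the Hamming weight
iff it is a monomial transformation `φ(x)_i = α_i x_{σ⁻¹(i)}` for some permutation
`σ` and units `α_i`. Consequently the orbits of the group of Hamming-weight
preserving linear automorphisms are exactly the Hamming spheres. -/
theorem stmt16 {F : Type*} [Field F] [Fintype F] [DecidableEq F] (n : ℕ) :
    (∀ φ : (Fin n → F) ≃ₗ[F] (Fin n → F),
      (∀ u : Fin n → F, hammingWt (φ u) = hammingWt u) ↔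
        ∃ (σ : Equiv.Perm (Fin n)) (α : Fin n → Fˣ),
          ∀ (x : Fin n → F) (i : Fin n), φ x i = (α i : F) * x (σ⁻¹ i)) ∧
    (∀ x y : Fin n → F,
      hammingWt x = hammingWt y ↔
        ∃ φ : (Fin n → F) ≃ₗ[F] (Fin n → F),
          (∀ u : Fin n → F, hammingWt (φ u) = hammingWt u) ∧ φ x = y) :=
  stmt16_general n
end

section
/- Let F_q be a finite field, n_1, …, n_t positive integers, n = n_1 + ⋯ + n_t, and identify F_q^n with F_q^{n_1} × ⋯ × F_q^{n_t} by blocks of coordinates; for 1 ≤ s ≤ t let block s denote the index set {n_1+⋯+n_{s-1}+1, …, n_1+⋯+n_{s-1}+n_s}, and let e_1, …, e_n be the standard basis. A linear automorphism g of F_q^n preserves the weak-order-poset weight w_{P₀} (i.e., w_{P₀}(gu) = w_{P₀}(u) for all u) if and only if for each 1 ≤ s ≤ t there is a permutation ρ_s of block s such that for every i in block s, g(e_i) = a_i e_{ρ_s(i)} + Σ_{l=1}^{n_1+⋯+n_{s-1}} b_{li} e_l for some a_i ∈ F_qˣ and b_{li} ∈ F_q. -/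
/-!
Block `s` occupies the interval `[S s, S s + n_s)`, so a nonzero vector whose last nonzero block is
`s` has weight in `(S s, S s + n_s]`, and its weight determines that block. A weight-preserving `g`
therefore sends `e_i`, of weight `S s + 1` for `i` in block `s`, to a vector with a single nonzero
entry in block `s`, at `ρ i` say, and none beyond it. If `ρ i = ρ j` for `i ≠ j`, the combination
of `e_i` and `e_j` cancelling that entry has weight above `S s` while its image has weight at most
`S s`; hence `ρ` is a permutation. Conversely, on the last nonzero block of `u` such a `g` acts by
the monomial map `u_i ↦ a_i u_i` placed at `ρ i`, so the weights of `u` and `g u` count the same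
entries.
-/

open Finset Function

namespace WeakOrderPoset

section Blocks

variable {t : ℕ} (ns : Fin t → ℕ)

def blockStart (s : Fin t) : ℕ := ∑ i ∈ Iio s, ns i

noncomputable def blockOf (l : Fin (∑ s, ns s)) : Fin t := (finSigmaFinEquiv.symm l).1

variable {ns}

theorem blockStart_eq_sum_ite (s : Fin t) :
    blockStart ns s = ∑ i, if i < s then ns i else 0 := by
  rw [blockStart, ← sum_filter, filter_gt_eq_Iio]

theorem blockStart_mono : Monotone (blockStart ns) :=
  fun _ _ h => sum_le_sum_of_subset (Iio_subset_Iio h)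

theorem blockStart_add_le {s s' : Fin t} (h : s < s') :
    blockStart ns s + ns s ≤ blockStart ns s' := by
  rw [blockStart, add_comm, ← sum_insert notMem_Iio_self, Iio_insert]
  exact sum_le_sum_of_subset fun i hi => mem_Iio.2 ((mem_Iic.1 hi).trans_lt h)

theorem le_of_blockStart_lt {s s' : Fin t} (h : blockStart ns s < blockStart ns s' + ns s') :
    s ≤ s' :=
  not_lt.1 fun h' => (blockStart_add_le h').not_gt h

theorem blockStart_add_mono : Monotone fun s => blockStart ns s + ns s := by
  intro s s' h
  rcases h.lt_or_eq with h | rfl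
  · exact (blockStart_add_le h).trans (Nat.le_add_right _ _)
  · exact le_rfl

theorem eq_of_mem_block {s s' : Fin t} {l : ℕ} (hs : blockStart ns s ≤ l)
    (hs' : l < blockStart ns s + ns s) (ht : blockStart ns s' ≤ l)
    (ht' : l < blockStart ns s' + ns s') : s = s' :=
  le_antisymm (le_of_blockStart_lt (ns := ns) (by omega))
    (le_of_blockStart_lt (ns := ns) (by omega))

theorem val_eq_blockStart_blockOf_add (l : Fin (∑ s, ns s)) :
    (l : ℕ) = blockStart ns (blockOf ns l) + (finSigmaFinEquiv.symm l).2 := by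
  set k := finSigmaFinEquiv.symm l
  have hIio : Iio k.1 = univ.map (Fin.castLEEmb k.1.2.le) := by
    ext i
    simpa using ⟨fun h => ⟨⟨i, h⟩, rfl⟩, by rintro ⟨a, rfl⟩; exact a.2⟩
  conv_lhs => rw [← finSigmaFinEquiv.apply_symm_apply l, finSigmaFinEquiv_apply]
  rw [blockOf, blockStart, hIio, sum_map]
  rfl

theorem blockStart_blockOf_le (l : Fin (∑ s, ns s)) : blockStart ns (blockOf ns l) ≤ l := by
  rw [val_eq_blockStart_blockOf_add l]
  exact Nat.le_add_right _ _

theorem lt_blockStart_blockOf_add (l : Fin (∑ s, ns s)) :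
    (l : ℕ) < blockStart ns (blockOf ns l) + ns (blockOf ns l) := by
  rw [val_eq_blockStart_blockOf_add l]
  exact Nat.add_lt_add_left (finSigmaFinEquiv.symm l).2.2 _

theorem pos_blockOf (l : Fin (∑ s, ns s)) : 0 < ns (blockOf ns l) := by
  have := blockStart_blockOf_le l
  have := lt_blockStart_blockOf_add l
  omega

theorem blockStart_le_iff {l : Fin (∑ s, ns s)} {s : Fin t} :
    blockStart ns s ≤ l ↔ s ≤ blockOf ns l :=
  ⟨fun h => le_of_blockStart_lt (h.trans_lt (lt_blockStart_blockOf_add l)),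
    fun h => (blockStart_mono h).trans (blockStart_blockOf_le l)⟩

theorem lt_blockStart_add_iff {l : Fin (∑ s, ns s)} {s : Fin t} :
    (l : ℕ) < blockStart ns s + ns s ↔ blockOf ns l ≤ s :=
  ⟨fun h => le_of_blockStart_lt ((blockStart_blockOf_le l).trans_lt h),
    fun h => (lt_blockStart_blockOf_add l).trans_le (blockStart_add_mono h)⟩

theorem blockOf_eq_iff {l : Fin (∑ s, ns s)} {s : Fin t} :
    blockOf ns l = s ↔ blockStart ns s ≤ l ∧ (l : ℕ) < blockStart ns s + ns s := by
  rw [blockStart_le_iff, lt_blockStart_add_iff, and_comm, le_antisymm_iff]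

theorem forall_mem_block_iff {P : Fin t → Fin (∑ s, ns s) → Prop} :
    (∀ s (l : Fin (∑ r, ns r)), blockStart ns s ≤ (l : ℕ) → (l : ℕ) < blockStart ns s + ns s →
      P s l) ↔ ∀ l, P (blockOf ns l) l :=
  ⟨fun h l => h _ l (blockStart_blockOf_le l) (lt_blockStart_blockOf_add l),
    fun h _ l hs hs' => blockOf_eq_iff.2 ⟨hs, hs'⟩ ▸ h l⟩

end Blocks

section Weight

variable {t : ℕ} (ns : Fin t → ℕ) {R : Type*} [Zero R]

def IsTopBlock (x : Fin (∑ s, ns s) → R) (s : Fin t) : Prop :=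
  (∀ l, x l ≠ 0 → (l : ℕ) < blockStart ns s + ns s) ∧ ∃ l, x l ≠ 0 ∧ blockStart ns s ≤ l

theorem IsTopBlock.ne_zero {ns} {x : Fin (∑ s, ns s) → R} {s : Fin t} (h : IsTopBlock ns x s) :
    x ≠ 0 := by
  obtain ⟨l, hl, -⟩ := h.2
  exact fun hx => hl (by simp [hx])

variable [DecidableEq R]

def IsWeakOrderWeight (w : (Fin (∑ s, ns s) → R) → ℕ) : Prop :=
  ∀ x s, IsTopBlock ns x s → w x = blockStart ns s + (Finset.univ.filter fun l : Fin (∑ r, ns r) =>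
    x l ≠ 0 ∧ blockStart ns s ≤ (l : ℕ) ∧ (l : ℕ) < blockStart ns s + ns s).card

variable {ns} {x : Fin (∑ s, ns s) → R} {s : Fin t}

theorem exists_isTopBlock (hx : x ≠ 0) : ∃ s, IsTopBlock ns x s := by
  obtain ⟨m, hm, hmax⟩ := exists_max_image (univ.filter fun l => x l ≠ 0) id
    (by simpa [Finset.Nonempty, funext_iff] using hx)
  rw [mem_filter] at hm
  refine ⟨blockOf ns m, fun l hl => ?_, m, hm.2, blockStart_blockOf_le m⟩
  exact (Fin.le_def.1 (hmax l (by simpa using hl))).trans_lt (lt_blockStart_blockOf_add m)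

namespace IsWeakOrderWeight

variable {w : (Fin (∑ s, ns s) → R) → ℕ}

theorem blockStart_lt (hw : IsWeakOrderWeight ns w) (h : IsTopBlock ns x s) :
    blockStart ns s < w x := by
  obtain ⟨l, hl, hsl⟩ := h.2
  have : 0 < (univ.filter fun l : Fin (∑ s, ns s) =>
      x l ≠ 0 ∧ blockStart ns s ≤ (l : ℕ) ∧ (l : ℕ) < blockStart ns s + ns s).card :=
    card_pos.2 ⟨l, by simp [hl, hsl, h.1 l hl]⟩
  rw [hw x s h]
  omega

theorem le_blockStart_add (hw : IsWeakOrderWeight ns w) (h : IsTopBlock ns x s) :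
    w x ≤ blockStart ns s + ns s := by
  rw [hw x s h, add_le_add_iff_left]
  calc _ ≤ (Ico (blockStart ns s) (blockStart ns s + ns s)).card :=
        card_le_card_of_injOn Fin.val (fun l hl => by simp_all) Fin.val_injective.injOn
    _ = ns s := by simp

theorem isTopBlock_eq (hw : IsWeakOrderWeight ns w) {s' : Fin t} (h : IsTopBlock ns x s')
    (hlt : blockStart ns s < w x) (hle : w x ≤ blockStart ns s + ns s) : s' = s := by
  have := hw.blockStart_lt h
  have := hw.le_blockStart_add h
  exact eq_of_mem_block (ns := ns) (l := w x - 1) (by omega) (by omega) (by omega) (by omega)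

theorem le_blockStart_of_forall_lt (hw : IsWeakOrderWeight ns w) (hx : x ≠ 0)
    (h : ∀ l, x l ≠ 0 → (l : ℕ) < blockStart ns s) : w x ≤ blockStart ns s := by
  obtain ⟨s', hs'⟩ := exists_isTopBlock hx
  obtain ⟨l, hl, hsl⟩ := hs'.2
  have : s' < s := blockStart_mono.reflect_lt (hsl.trans_lt (h l hl))
  exact (hw.le_blockStart_add hs').trans (blockStart_add_le this)

theorem blockStart_lt_of_ne_zero (hw : IsWeakOrderWeight ns w) {l : Fin (∑ s, ns s)}
    (hl : x l ≠ 0) (hsl : blockStart ns s ≤ l) : blockStart ns s < w x := by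
  obtain ⟨s', hs'⟩ := exists_isTopBlock (ns := ns) (x := x) fun hx => hl (by simp [hx])
  have : s ≤ s' := le_of_blockStart_lt (hsl.trans_lt (hs'.1 l hl))
  exact (blockStart_mono this).trans_lt (hw.blockStart_lt hs')

theorem weight_single (hw : IsWeakOrderWeight ns w) (i : Fin (∑ s, ns s)) {c : R} (hc : c ≠ 0) :
    w (Pi.single i c : Fin (∑ s, ns s) → R) = blockStart ns (blockOf ns i) + 1 := by
  have hsupp : ∀ l, (Pi.single i c : Fin (∑ s, ns s) → R) l ≠ 0 → l = i := fun l hl => by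
    by_contra h
    exact hl (Pi.single_eq_of_ne h _)
  have htop : IsTopBlock ns (Pi.single i c) (blockOf ns i) :=
    ⟨fun l hl => hsupp l hl ▸ lt_blockStart_blockOf_add i, i, by simpa, blockStart_blockOf_le i⟩
  rw [hw _ _ htop, card_eq_one.2 ⟨i, ?_⟩]
  ext l
  simp only [mem_filter, mem_univ, true_and, mem_singleton]
  refine ⟨fun hl => hsupp l hl.1, ?_⟩
  rintro rfl
  exact ⟨by simpa, blockStart_blockOf_le l, lt_blockStart_blockOf_add l⟩

theorem exists_lead_of_eq_blockStart_add_one (hw : IsWeakOrderWeight ns w) (hx : x ≠ 0)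
    (hs : 0 < ns s) (hwx : w x = blockStart ns s + 1) :
    ∃ j, x j ≠ 0 ∧ blockOf ns j = s ∧ ∀ l, l ≠ j → x l ≠ 0 → (l : ℕ) < blockStart ns s := by
  obtain ⟨s', hs'⟩ := exists_isTopBlock hx
  obtain rfl : s = s' := (hw.isTopBlock_eq hs' (by omega) (by omega)).symm
  have hcard : (univ.filter fun l : Fin (∑ s, ns s) =>
      x l ≠ 0 ∧ blockStart ns s ≤ (l : ℕ) ∧ (l : ℕ) < blockStart ns s + ns s).card = 1 := by
    have := hw x s hs'
    omega
  obtain ⟨j, hj⟩ := card_eq_one.1 hcard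
  have hmem : ∀ l, x l ≠ 0 ∧ blockStart ns s ≤ (l : ℕ) ∧ (l : ℕ) < blockStart ns s + ns s ↔
      l = j := fun l => by simpa using congrArg (l ∈ ·) hj
  obtain ⟨hxj, hj⟩ := (hmem j).2 rfl
  refine ⟨j, hxj, blockOf_eq_iff.2 hj, fun l hlj hl => ?_⟩
  by_contra hge
  exact hlj ((hmem l).1 ⟨hl, not_lt.1 hge, hs'.1 l hl⟩)

end IsWeakOrderWeight

end Weight

section LinearMaps

theorem linearMap_apply_eq_sum {R ι : Type*} [Semiring R] [Fintype ι] [DecidableEq ι]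
    (f : (ι → R) →ₗ[R] (ι → R)) (u : ι → R) (l : ι) :
    f u l = ∑ i, u i * f (Pi.single i 1) l := by
  conv_lhs => rw [pi_eq_sum_univ' u]
  simp [map_sum, map_smul]

variable {t : ℕ} (ns : Fin t → ℕ) {R : Type*}

def IsBlockTriangularMonomial [Semiring R]
    (f : (Fin (∑ s, ns s) → R) →ₗ[R] (Fin (∑ s, ns s) → R))
    (ρ : Equiv.Perm (Fin (∑ s, ns s))) (a : Fin (∑ s, ns s) → Rˣ) : Prop :=
  (∀ i, blockOf ns (ρ i) = blockOf ns i) ∧ (∀ i, f (Pi.single i 1) (ρ i) = a i) ∧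
    ∀ i l, l ≠ ρ i → f (Pi.single i 1) l ≠ 0 → (l : ℕ) < blockStart ns (blockOf ns i)

variable {ns}

namespace IsBlockTriangularMonomial

variable [Semiring R] {f : (Fin (∑ s, ns s) → R) →ₗ[R] (Fin (∑ s, ns s) → R)}
  {ρ : Equiv.Perm (Fin (∑ s, ns s))} {a : Fin (∑ s, ns s) → Rˣ}
  {u : Fin (∑ s, ns s) → R} {s : Fin t}

theorem blockOf_symm_apply (hf : IsBlockTriangularMonomial ns f ρ a) (l : Fin (∑ s, ns s)) :
    blockOf ns (ρ.symm l) = blockOf ns l := by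
  rw [← hf.1, ρ.apply_symm_apply]

theorem apply_eq_of_blockStart_le (hf : IsBlockTriangularMonomial ns f ρ a)
    (hu : ∀ l, u l ≠ 0 → (l : ℕ) < blockStart ns s + ns s) {l : Fin (∑ s, ns s)}
    (hl : blockStart ns s ≤ l) : f u l = u (ρ.symm l) * a (ρ.symm l) := by
  rw [linearMap_apply_eq_sum, sum_eq_single (ρ.symm l)]
  · rw [← hf.2.1, ρ.apply_symm_apply]
  · intro i _ hi
    rcases eq_or_ne (u i) 0 with hui | hui
    · rw [hui, zero_mul]
    have hblk : blockOf ns i ≤ s := lt_blockStart_add_iff.1 (hu i hui)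
    have hli : l ≠ ρ i := fun h => hi (by rw [h, ρ.symm_apply_apply])
    have : f (Pi.single i 1) l = 0 := not_ne_iff.1 fun h =>
      (hf.2.2 i l hli h).not_ge ((blockStart_mono hblk).trans hl)
    rw [this, mul_zero]
  · simp

theorem isTopBlock_apply (hf : IsBlockTriangularMonomial ns f ρ a) (hu : IsTopBlock ns u s) :
    IsTopBlock ns (f u) s := by
  obtain ⟨i, hi, hsi⟩ := hu.2
  have hsρi : blockStart ns s ≤ ρ i := by
    rw [blockStart_le_iff, hf.1, ← blockStart_le_iff]
    exact hsi
  refine ⟨fun l hl => ?_, ρ i, ?_, hsρi⟩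
  · by_contra hge
    rw [hf.apply_eq_of_blockStart_le hu.1 (by omega)] at hl
    have := hu.1 _ (left_ne_zero_of_mul hl)
    rw [lt_blockStart_add_iff, hf.blockOf_symm_apply, ← lt_blockStart_add_iff] at this
    exact hge this
  · rw [hf.apply_eq_of_blockStart_le hu.1 hsρi, ρ.symm_apply_apply]
    exact (Units.mul_left_eq_zero _).not.2 hi

theorem weight_apply [DecidableEq R] {w : (Fin (∑ s, ns s) → R) → ℕ}
    (hw : IsWeakOrderWeight ns w) (hf : IsBlockTriangularMonomial ns f ρ a) (u) :
    w (f u) = w u := by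
  rcases eq_or_ne u 0 with rfl | hu
  · rw [map_zero]
  obtain ⟨s, hs⟩ := exists_isTopBlock hu
  rw [hw _ _ (hf.isTopBlock_apply hs), hw _ _ hs, ← card_map ρ.symm.toEmbedding]
  congr 2
  ext i
  have hstart : blockStart ns s ≤ ρ i ↔ blockStart ns s ≤ i := by
    rw [blockStart_le_iff, hf.1, blockStart_le_iff]
  have hend : (ρ i : ℕ) < blockStart ns s + ns s ↔ (i : ℕ) < blockStart ns s + ns s := by
    rw [lt_blockStart_add_iff, hf.1, lt_blockStart_add_iff]
  simp only [mem_map_equiv, Equiv.symm_symm, mem_filter, mem_univ, true_and, hstart, hend]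
  refine and_congr_left fun h => ?_
  rw [hf.apply_eq_of_blockStart_le hs.1 (hstart.2 h.1), ρ.symm_apply_apply]
  exact (Units.mul_left_eq_zero _).not

end IsBlockTriangularMonomial

end LinearMaps

section WeightPreserving

variable {t : ℕ} {ns : Fin t → ℕ} {R : Type*} [CommRing R] [DecidableEq R]
  {w : (Fin (∑ s, ns s) → R) → ℕ} {f : (Fin (∑ s, ns s) → R) →ₗ[R] (Fin (∑ s, ns s) → R)}

theorem exists_lead_apply_single [Nontrivial R] (hw : IsWeakOrderWeight ns w)
    (hinj : Injective f) (hfw : ∀ u, w (f u) = w u) (i : Fin (∑ s, ns s)) :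
    ∃ j, f (Pi.single i 1) j ≠ 0 ∧ blockOf ns j = blockOf ns i ∧
      ∀ l, l ≠ j → f (Pi.single i 1) l ≠ 0 → (l : ℕ) < blockStart ns (blockOf ns i) :=
  hw.exists_lead_of_eq_blockStart_add_one ((map_ne_zero_iff f hinj).2 (by simp))
    (pos_blockOf i) (by rw [hfw, hw.weight_single i one_ne_zero])

theorem injective_of_lead (hw : IsWeakOrderWeight ns w) (hinj : Injective f)
    (hfw : ∀ u, w (f u) = w u) {ρ : Fin (∑ s, ns s) → Fin (∑ s, ns s)}
    (hρ : ∀ i, f (Pi.single i 1) (ρ i) ≠ 0 ∧ blockOf ns (ρ i) = blockOf ns i ∧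
      ∀ l, l ≠ ρ i → f (Pi.single i 1) l ≠ 0 → (l : ℕ) < blockStart ns (blockOf ns i)) :
    Injective ρ := by
  intro i j hij
  by_contra hne
  obtain ⟨-, hbi, hlow_i⟩ := hρ i
  obtain ⟨hj, hbj, hlow_j⟩ := hρ j
  have hblk : blockOf ns j = blockOf ns i := by rw [← hbj, ← hij, hbi]
  set c := f (Pi.single j 1) (ρ i)
  set d := f (Pi.single i 1) (ρ i)
  set u : Fin (∑ s, ns s) → R := c • Pi.single i 1 - d • Pi.single j 1
  have hui : u i = c := by simp [u, hne]
  have hc : c ≠ 0 := by rwa [← hij] at hj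
  -- the entry at `ρ i` cancels, so `f u` lives strictly below the block of `i`
  have hfu : ∀ l, f u l ≠ 0 → (l : ℕ) < blockStart ns (blockOf ns i) := by
    intro l hl
    by_contra hge
    apply hl
    simp only [u, map_sub, map_smul, Pi.sub_apply, Pi.smul_apply, smul_eq_mul]
    rcases eq_or_ne l (ρ i) with rfl | hl'
    · ring
    · rw [not_ne_iff.1 (mt (hlow_i l hl') hge),
        not_ne_iff.1 (mt (hlow_j l (hij ▸ hl')) (hblk ▸ hge))]
      ring
  have hu : u ≠ 0 := fun h => hc (by rw [← hui, h, Pi.zero_apply])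
  have hle := hw.le_blockStart_of_forall_lt ((map_ne_zero_iff f hinj).2 hu) hfu
  have hlt := hw.blockStart_lt_of_ne_zero (hui ▸ hc) (blockStart_blockOf_le i)
  rw [hfw] at hle
  omega

end WeightPreserving

theorem exists_isBlockTriangularMonomial {t : ℕ} {ns : Fin t → ℕ} {F : Type*} [Field F]
    [DecidableEq F] {w : (Fin (∑ s, ns s) → F) → ℕ}
    {f : (Fin (∑ s, ns s) → F) →ₗ[F] (Fin (∑ s, ns s) → F)} (hw : IsWeakOrderWeight ns w)
    (hinj : Injective f) (hfw : ∀ u, w (f u) = w u) :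
    ∃ ρ a, IsBlockTriangularMonomial ns f ρ a := by
  choose ρ hρ using exists_lead_apply_single hw hinj hfw
  have hbij : Bijective ρ := Finite.injective_iff_bijective.1 (injective_of_lead hw hinj hfw hρ)
  exact ⟨Equiv.ofBijective ρ hbij, fun i => Units.mk0 _ (hρ i).1, fun i => (hρ i).2.1,
    fun _ => rfl, fun i => (hρ i).2.2⟩

end WeakOrderPoset

open WeakOrderPoset in
theorem stmt17_general {F : Type*} [Field F] [DecidableEq F]
    (t : ℕ) (ns : Fin t → ℕ)
    (n : ℕ) (hn : n = ∑ s, ns s)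
    (S : Fin t → ℕ)
    (hS : ∀ s, S s = ∑ i : Fin t, if i < s then ns i else 0)
    (w : (Fin n → F) → ℕ)
    (hw : ∀ x : Fin n → F, x ≠ 0 → ∀ s : Fin t,
      (∀ l : Fin n, x l ≠ 0 → (l : ℕ) < S s + ns s) →
      (∃ l : Fin n, x l ≠ 0 ∧ S s ≤ (l : ℕ)) →
      w x = S s + (Finset.univ.filter fun l : Fin n =>
        x l ≠ 0 ∧ S s ≤ (l : ℕ) ∧ (l : ℕ) < S s + ns s).card)
    (g : (Fin n → F) ≃ₗ[F] (Fin n → F)) :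
    (∀ u : Fin n → F, w (g u) = w u) ↔
      ∃ (ρ : Equiv.Perm (Fin n)) (a : Fin n → Fˣ),
        (∀ (s : Fin t) (i : Fin n), S s ≤ (i : ℕ) → (i : ℕ) < S s + ns s →
          S s ≤ (ρ i : ℕ) ∧ (ρ i : ℕ) < S s + ns s) ∧
        (∀ i : Fin n, g (Pi.single i 1) (ρ i) = (a i : F)) ∧
        (∀ (s : Fin t) (i : Fin n), S s ≤ (i : ℕ) → (i : ℕ) < S s + ns s →
          ∀ l : Fin n, l ≠ ρ i → g (Pi.single i 1) l ≠ 0 → (l : ℕ) < S s) := by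
  subst hn
  obtain rfl : S = blockStart ns := funext fun s => (hS s).trans (blockStart_eq_sum_ite s).symm
  have hw' : IsWeakOrderWeight ns w := fun x s h => hw x h.ne_zero s h.1 h.2
  have key : (∀ u, w (g u) = w u) ↔ ∃ ρ a, IsBlockTriangularMonomial ns g.toLinearMap ρ a :=
    ⟨exists_isBlockTriangularMonomial hw' g.injective, fun ⟨_, _, h⟩ => h.weight_apply hw'⟩
  rw [key]
  simp only [IsBlockTriangularMonomial, forall_mem_block_iff, ← blockOf_eq_iff]
  rfl

/-- Blocks of `[n]` (`n = n_1 + ⋯ + n_t`): block `s` consists of the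
indices `l` with `S s ≤ l < S s + n_s`, where `S s = n_1 + ⋯ + n_{s-1}`. The
weak-order-poset weight `w` on `F_q^n` is characterized by `w 0 = 0` and, for
`x ≠ 0` with top nonzero block `s`, `w x = S s + (Hamming weight of x in block s)`.
A linear automorphism `g` of `F_q^n` preserves `w` iff for each block `s` there is
a permutation `ρ_s` of block `s` (assembled below into a block-preserving
permutation `ρ` of all indices) such that for every `i` in block `s`,
`g(e_i) = a_i e_{ρ(i)} + Σ_{l < S s} b_{li} e_l` with `a_i ∈ F_qˣ`. -/
theorem stmt17 {F : Type*} [Field F] [Fintype F] [DecidableEq F]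
    (t : ℕ) (ns : Fin t → ℕ) (hpos : ∀ s, 0 < ns s)
    (n : ℕ) (hn : n = ∑ s, ns s)
    (S : Fin t → ℕ)
    (hS : ∀ s, S s = ∑ i : Fin t, if i < s then ns i else 0)
    (w : (Fin n → F) → ℕ)
    (hw0 : w 0 = 0)
    (hw : ∀ x : Fin n → F, x ≠ 0 → ∀ s : Fin t,
      (∀ l : Fin n, x l ≠ 0 → (l : ℕ) < S s + ns s) →
      (∃ l : Fin n, x l ≠ 0 ∧ S s ≤ (l : ℕ)) →
      w x = S s + (Finset.univ.filter fun l : Fin n =>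
        x l ≠ 0 ∧ S s ≤ (l : ℕ) ∧ (l : ℕ) < S s + ns s).card)
    (g : (Fin n → F) ≃ₗ[F] (Fin n → F)) :
    (∀ u : Fin n → F, w (g u) = w u) ↔
      ∃ (ρ : Equiv.Perm (Fin n)) (a : Fin n → Fˣ),
        (∀ (s : Fin t) (i : Fin n), S s ≤ (i : ℕ) → (i : ℕ) < S s + ns s →
          S s ≤ (ρ i : ℕ) ∧ (ρ i : ℕ) < S s + ns s) ∧
        (∀ i : Fin n, g (Pi.single i 1) (ρ i) = (a i : F)) ∧
        (∀ (s : Fin t) (i : Fin n), S s ≤ (i : ℕ) → (i : ℕ) < S s + ns s →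
          ∀ l : Fin n, l ≠ ρ i → g (Pi.single i 1) l ≠ 0 → (l : ℕ) < S s) :=
  stmt17_general t ns n hn S hS w hw g
end

section
/- Let F_q be a finite field, n_1, …, n_t positive integers, and n = n_1 + ⋯ + n_t. Let w_{P₀} be the weak-order-poset weight on F_q^n associated to the block sizes (n_1, …, n_t), and let w_{P̌₀} be the weak-order-poset weight associated to the reversed block sizes (n_t, …, n_1) under the corresponding identification of F_q^n with F_q^{n_t} × ⋯ × F_q^{n_1}. If a linear automorphism g of F_q^n preserves w_{P₀}, then its transpose ᵗg (the adjoint with respect to the standard bilinear form x·y = Σ_{i=1}^n x_i y_i, characterized by gx·y = x·ᵗg y for all x, y) is a linear automorphism of F_q^n preserving w_{P̌₀}. -/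
/-!
The weight of `x` exceeds the offset of block `s` exactly when `x` has a nonzero coordinate in a
block `≥ s`, so a weight-preserving `g` has a block upper triangular matrix. A unit vector of
block `s` has the least weight among the vectors whose top block is `s`, so every column of a
diagonal block has a single nonzero entry, and invertibility makes the diagonal blocks monomial.
Conversely, every block triangular matrix with monomial diagonal blocks preserves the weight.
The transpose of such a matrix has the same shape for the reversed order of the blocks, and the
weight of the dual poset `P̌₀` is the weight attached to that order.
-/

section

open Finset Matrix OrderDual

variable {ι κ R : Type*} [LinearOrder κ]

section Zero

variable [Zero R]

def IsTopBlock (b : ι → κ) (x : ι → R) (s : κ) : Prop :=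
  (∀ l, x l ≠ 0 → b l ≤ s) ∧ ∃ l, x l ≠ 0 ∧ b l = s

def IsBlockMonomial (b : ι → κ) (M : Matrix ι ι R) : Prop :=
  M.BlockTriangular b ∧ ∃ π : Equiv.Perm ι, ∀ i j, M i j ≠ 0 ∧ b i = b j ↔ i = π j

theorem IsBlockMonomial.transpose {b : ι → κ} {M : Matrix ι ι R} (hM : IsBlockMonomial b M) :
    IsBlockMonomial (toDual ∘ b) Mᵀ := by
  obtain ⟨hT, π, hπ⟩ := hM
  refine ⟨hT.transpose, π.symm, fun i j => ?_⟩
  rw [Equiv.eq_symm_apply, eq_comm (a := π i), ← hπ j i]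
  simp only [transpose_apply, Function.comp_apply, toDual_inj, eq_comm (a := b i)]

variable [Fintype ι] [DecidableEq R]

/-- `c s` is the weight offset of the block `b⁻¹ s`; for `P₀` it is the total size of the blocks
below `s`. -/
structure IsBlockWeight (b : ι → κ) (c : κ → ℕ) (w : (ι → R) → ℕ) : Prop where
  offset_add_card_le : ∀ ⦃s s'⦄, s < s' → c s + #{l | b l = s} ≤ c s'
  eq_of_isTopBlock : ∀ x s, IsTopBlock b x s → w x = c s + #{l | x l ≠ 0 ∧ b l = s}

theorem exists_isTopBlock (b : ι → κ) {x : ι → R} (hx : x ≠ 0) : ∃ s, IsTopBlock b x s := by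
  obtain ⟨l₀, hl₀⟩ := Function.ne_iff.1 hx
  obtain ⟨l, hl, hmax⟩ :=
    (univ.filter fun l => x l ≠ 0).exists_max_image b ⟨l₀, by simpa using hl₀⟩
  exact ⟨b l, fun l' hl' => hmax l' (by simpa using hl'), l, by simpa using hl, rfl⟩

namespace IsBlockWeight

variable {b : ι → κ} {c : κ → ℕ} {w : (ι → R) → ℕ}

theorem monotone_offset (hw : IsBlockWeight b c w) : Monotone c := fun _ _ h =>
  h.eq_or_lt.elim (fun h => h ▸ le_rfl) fun h =>
    (Nat.le_add_right _ _).trans (hw.offset_add_card_le h)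

theorem offset_lt_weight (hw : IsBlockWeight b c w) {x : ι → R} {l : ι} (hl : x l ≠ 0) :
    c (b l) < w x := by
  obtain ⟨s, hs⟩ := exists_isTopBlock b fun h : x = 0 => hl (by simp [h])
  obtain ⟨l', hl', rfl⟩ := hs.2
  have hpos : 0 < #{i | x i ≠ 0 ∧ b i = b l'} := card_pos.2 ⟨l', by simp [hl']⟩
  have hmono := hw.monotone_offset (hs.1 l hl)
  rw [hw.eq_of_isTopBlock x _ hs]
  omega

theorem weight_le_offset (hw : IsBlockWeight b c w) {x : ι → R} (hx : x ≠ 0) {s : κ}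
    (hs : ∀ l, x l ≠ 0 → b l < s) : w x ≤ c s := by
  obtain ⟨s', hs'⟩ := exists_isTopBlock b hx
  obtain ⟨l, hl, rfl⟩ := hs'.2
  rw [hw.eq_of_isTopBlock x _ hs']
  calc c (b l) + #{i | x i ≠ 0 ∧ b i = b l} ≤ c (b l) + #{i | b i = b l} := by
        gcongr with i; exact fun h => h.2
    _ ≤ c s := hw.offset_add_card_le (hs l hl)

theorem weight_single [DecidableEq ι] (hw : IsBlockWeight b c w) (j : ι) {a : R} (ha : a ≠ 0) :
    w (Pi.single j a) = c (b j) + 1 := by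
  have hsupp : ∀ i, (Pi.single j a : ι → R) i ≠ 0 ↔ i = j := fun i => by
    by_cases h : i = j <;> simp [h, ha]
  rw [hw.eq_of_isTopBlock _ (b j) ⟨fun l hl => ((hsupp l).1 hl) ▸ le_rfl, j, by simp [ha], rfl⟩]
  congr 1
  rw [card_eq_one]
  exact ⟨j, by
    ext i
    simpa only [mem_filter, mem_univ, true_and, mem_singleton, hsupp] using
      and_iff_left_of_imp fun h => congrArg b h⟩

end IsBlockWeight

end Zero

section Domain

variable [Fintype ι] [CommRing R] [IsDomain R] [DecidableEq R] {b : ι → κ} {c : κ → ℕ}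
  {w : (ι → R) → ℕ} {M : Matrix ι ι R}

theorem IsBlockMonomial.weight_mulVec (hM : IsBlockMonomial b M) (hw : IsBlockWeight b c w)
    (x : ι → R) : w (M *ᵥ x) = w x := by
  obtain ⟨hT, π, hπ⟩ := hM
  rcases eq_or_ne x 0 with rfl | hx
  · rw [mulVec_zero]
  obtain ⟨s, hs⟩ := exists_isTopBlock b hx
  have hbπ : ∀ j, b (π j) = b j := fun j => ((hπ (π j) j).2 rfl).2
  have hMπ : ∀ j, M (π j) j ≠ 0 := fun j => ((hπ (π j) j).2 rfl).1
  have hlow : ∀ i, (M *ᵥ x) i ≠ 0 → b i ≤ s := fun i hi => by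
    by_contra! hsi
    refine hi (sum_eq_zero fun k _ => mul_eq_zero.2 ?_)
    by_cases hk : x k = 0
    · exact Or.inr hk
    · exact Or.inl (hT ((hs.1 k hk).trans_lt hsi))
  have hdiag : ∀ j, b j = s → (M *ᵥ x) (π j) = M (π j) j * x j := fun j hj => by
    refine sum_eq_single j (fun k _ hkj => mul_eq_zero.2 ?_) (by simp)
    by_cases hk : x k = 0
    · exact Or.inr hk
    refine Or.inl (by_contra fun hMk => ?_)
    rcases (hs.1 k hk).lt_or_eq with hlt | heq
    · exact hMk (hT (by rwa [hbπ, hj]))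
    · exact hkj (π.injective ((hπ _ _).1 ⟨hMk, by rw [hbπ, hj, heq]⟩)).symm
  have hcard : #{i | (M *ᵥ x) i ≠ 0 ∧ b i = s} = #{j | x j ≠ 0 ∧ b j = s} := by
    refine card_equiv π.symm fun i => ?_
    obtain ⟨j, rfl⟩ := π.surjective i
    simp only [mem_filter, mem_univ, true_and, Equiv.symm_apply_apply, hbπ]
    exact and_congr_left fun hj => by rw [hdiag j hj, mul_ne_zero_iff, and_iff_right (hMπ j)]
  obtain ⟨l, hl, hls⟩ := hs.2
  have htop : IsTopBlock b (M *ᵥ x) s :=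
    ⟨hlow, π l, by rw [hdiag l hls]; exact mul_ne_zero (hMπ l) hl, by rw [hbπ, hls]⟩
  rw [hw.eq_of_isTopBlock _ _ htop, hw.eq_of_isTopBlock _ _ hs, hcard]

variable [DecidableEq ι]

theorem blockTriangular_of_weight_mulVec (hw : IsBlockWeight b c w)
    (hMw : ∀ x, w (M *ᵥ x) = w x) : M.BlockTriangular b := by
  intro i j hij
  by_contra hM
  have hlt := hw.offset_lt_weight (x := M *ᵥ Pi.single j 1) (l := i) (by simpa using hM)
  have hle := hw.weight_le_offset (x := Pi.single j 1) (s := b i) (by simp) fun l hl => by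
    obtain rfl : l = j := by by_contra h; simp [h] at hl
    exact hij
  rw [hMw] at hlt
  omega

theorem exists_eq_iff_of_weight_mulVec (hw : IsBlockWeight b c w)
    (hinj : Function.Injective M.mulVec) (hMw : ∀ x, w (M *ᵥ x) = w x) (j : ι) :
    ∃ p, ∀ i, M i j ≠ 0 ∧ b i = b j ↔ i = p := by
  have hT := blockTriangular_of_weight_mulVec hw hMw
  have hcol : M *ᵥ Pi.single j 1 = M.col j := mulVec_single_one M j
  have hx0 : M.col j ≠ 0 := by
    rw [← hcol, ← mulVec_zero M]
    exact hinj.ne (by simp)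
  have hwx : w (M.col j) = c (b j) + 1 := by rw [← hcol, hMw, hw.weight_single j one_ne_zero]
  have hsupp : ∀ i, M.col j i ≠ 0 → b i ≤ b j := fun i h => not_lt.1 fun h' => h (hT h')
  have htop : IsTopBlock b (M.col j) (b j) := by
    refine ⟨hsupp, ?_⟩
    by_contra! h
    have := hw.weight_le_offset hx0 fun i hi => (hsupp i hi).lt_of_ne (h i hi)
    omega
  rw [hw.eq_of_isTopBlock _ _ htop, add_right_inj] at hwx
  obtain ⟨p, hp⟩ := card_eq_one.1 hwx
  refine ⟨p, fun i => ?_⟩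
  have := Finset.ext_iff.1 hp i
  simp only [mem_filter, mem_univ, true_and, mem_singleton] at this
  exact this

/-- If `π j = π j' = p`, then `M p j' • eⱼ - M p j • eⱼ'` has a coordinate in block `b j` but
its image under `M` does not, contradicting weight preservation. -/
theorem injective_of_weight_mulVec (hw : IsBlockWeight b c w)
    (hinj : Function.Injective M.mulVec) (hMw : ∀ x, w (M *ᵥ x) = w x) {π : ι → ι}
    (hπ : ∀ i j, M i j ≠ 0 ∧ b i = b j ↔ i = π j) : Function.Injective π := by
  intro j j' hjj'
  by_contra hne
  have hT := blockTriangular_of_weight_mulVec hw hMw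
  set p := π j
  obtain ⟨hpj, hbj⟩ := (hπ p j).2 rfl
  obtain ⟨hpj', hbj'⟩ := (hπ p j').2 hjj'
  set x : ι → R := Pi.single j (M p j') - Pi.single j' (M p j)
  have hxj : x j ≠ 0 := by simp [x, hne, hpj']
  have hMx : ∀ i, (M *ᵥ x) i = M i j * M p j' - M i j' * M p j := fun i => by
    simp [x, mulVec_sub]; ring
  have hlow : ∀ i, (M *ᵥ x) i ≠ 0 → b i < b j := fun i hi => by
    rw [hMx] at hi
    rcases lt_trichotomy (b i) (b j) with h | h | h
    · exact h
    · by_cases hip : i = p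
      · exact absurd (by rw [hip]; ring) hi
      have h1 : M i j = 0 := by_contra fun h1 => hip ((hπ i j).1 ⟨h1, h⟩)
      have h2 : M i j' = 0 := by_contra fun h2 =>
        hip (((hπ i j').1 ⟨h2, by rw [h, ← hbj, hbj']⟩).trans hjj'.symm)
      simp [h1, h2] at hi
    · have h2 : M i j' = 0 := hT (by rwa [← hbj', hbj])
      simp [hT h, h2] at hi
  have hx0 : M *ᵥ x ≠ 0 := by
    rw [← mulVec_zero M]
    exact hinj.ne fun h => hxj (by simp [h])
  have hle := hw.weight_le_offset hx0 hlow
  have hlt := hw.offset_lt_weight hxj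
  rw [hMw] at hle
  omega

theorem isBlockMonomial_of_weight_mulVec (hw : IsBlockWeight b c w)
    (hinj : Function.Injective M.mulVec) (hMw : ∀ x, w (M *ᵥ x) = w x) : IsBlockMonomial b M := by
  choose π hπ using exists_eq_iff_of_weight_mulVec hw hinj hMw
  have hπinj := injective_of_weight_mulVec hw hinj hMw fun i j => hπ j i
  exact ⟨blockTriangular_of_weight_mulVec hw hMw,
    Equiv.ofBijective π (Finite.injective_iff_bijective.1 hπinj), fun i j => hπ j i⟩

end Domain

theorem transpose_toMatrix'_mulVec [Fintype ι] [DecidableEq ι] [CommSemiring R]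
    {f f' : (ι → R) →ₗ[R] ι → R} (h : ∀ x y, f x ⬝ᵥ y = x ⬝ᵥ f' y) (y : ι → R) :
    (LinearMap.toMatrix' f)ᵀ *ᵥ y = f' y := by
  ext j
  rw [← single_one_dotProduct j (f' y), ← h, mulVec_transpose]
  simp [vecMul, dotProduct, LinearMap.toMatrix'_apply, mul_comm]

section BlockSizes

theorem sum_ite_lt_add_le_sum_ite_lt [Fintype κ] (ns : κ → ℕ) {s s' : κ} (h : s < s') :
    (∑ i, if i < s then ns i else 0) + ns s ≤ ∑ i, if i < s' then ns i else 0 := by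
  rw [← Fintype.sum_ite_eq' s ns, ← sum_add_distrib]
  refine sum_le_sum fun i _ => ?_
  split_ifs <;> grind

theorem sum_ite_lt_add_le_sum [Fintype κ] (ns : κ → ℕ) (s : κ) :
    (∑ i, if i < s then ns i else 0) + ns s ≤ ∑ i, ns i := by
  rw [← Fintype.sum_ite_eq' s ns, ← sum_add_distrib]
  refine sum_le_sum fun i _ => ?_
  split_ifs <;> grind

variable {t n : ℕ} {ns : Fin t → ℕ} {S : Fin t → ℕ}

theorem start_add_le_start (hS : ∀ s, S s = ∑ i : Fin t, if i < s then ns i else 0)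
    {s s' : Fin t} (h : s < s') : S s + ns s ≤ S s' := by
  simpa only [← hS] using sum_ite_lt_add_le_sum_ite_lt ns h

/-- The intervals `[S s, S s + ns s)` are disjoint, lie in `[0, n)` and have total length `n`. -/
theorem exists_mem_block (hS : ∀ s, S s = ∑ i : Fin t, if i < s then ns i else 0)
    (hn : n = ∑ s, ns s) {l : ℕ} (hl : l < n) : ∃ s, S s ≤ l ∧ l < S s + ns s := by
  have hdisj_of_lt : ∀ {s s'}, s < s' →
      Disjoint (Ico (S s) (S s + ns s)) (Ico (S s') (S s' + ns s')) := fun h =>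
    Finset.disjoint_left.2 fun x hx hx' => by
      have := start_add_le_start hS h
      simp only [mem_Ico] at hx hx'
      omega
  have hdisj : (↑(univ : Finset (Fin t)) : Set (Fin t)).PairwiseDisjoint
      fun s => Ico (S s) (S s + ns s) := fun s _ s' _ hne =>
    hne.lt_or_gt.elim hdisj_of_lt fun h => (hdisj_of_lt h).symm
  have hsub : univ.biUnion (fun s => Ico (S s) (S s + ns s)) ⊆ range n := by
    intro x hx
    obtain ⟨s, -, hx⟩ := mem_biUnion.1 hx
    have := sum_ite_lt_add_le_sum ns s
    rw [← hS, ← hn] at this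
    rw [mem_Ico] at hx
    exact mem_range.2 (by omega)
  have hcover := eq_of_subset_of_card_le hsub (by rw [card_biUnion hdisj]; simp [hn])
  have hmem : l ∈ univ.biUnion (fun s => Ico (S s) (S s + ns s)) := hcover ▸ mem_range.2 hl
  simpa using hmem

def IsBlockMap (S ns : Fin t → ℕ) (b : Fin n → Fin t) : Prop :=
  ∀ (l : Fin n) s, (S s ≤ l ↔ s ≤ b l) ∧ (l < S s + ns s ↔ b l ≤ s)

theorem exists_isBlockMap (hS : ∀ s, S s = ∑ i : Fin t, if i < s then ns i else 0)
    (hn : n = ∑ s, ns s) : ∃ b : Fin n → Fin t, IsBlockMap S ns b := by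
  choose b hb using fun l : Fin n => exists_mem_block hS hn l.isLt
  refine ⟨b, fun l s => ?_⟩
  obtain ⟨h1, h2⟩ := hb l
  rcases lt_trichotomy s (b l) with h | rfl | h
  · have := start_add_le_start hS h
    exact ⟨iff_of_true (by omega) h.le, iff_of_false (by omega) (not_le.2 h)⟩
  · exact ⟨iff_of_true h1 le_rfl, iff_of_true h2 le_rfl⟩
  · have := start_add_le_start hS h
    exact ⟨iff_of_false (by omega) (not_le.2 h), iff_of_true (by omega) h.le⟩

end BlockSizes

section WeakOrder

variable {F : Type*} [Zero F] [DecidableEq F] {t n : ℕ} {ns S : Fin t → ℕ} {b : Fin n → Fin t}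

theorem mem_block_iff (hb : IsBlockMap S ns b)
    (l : Fin n) (s : Fin t) : S s ≤ l ∧ l < S s + ns s ↔ b l = s := by
  rw [(hb l s).1, (hb l s).2, le_antisymm_iff, and_comm]

theorem card_block_le (hb : IsBlockMap S ns b)
    (s : Fin t) : #{l | b l = s} ≤ ns s :=
  calc #{l | b l = s} ≤ #(Ico (S s) (S s + ns s)) :=
        card_le_card_of_injOn Fin.val
          (fun l hl => by simpa [← mem_block_iff hb] using hl) Fin.val_injective.injOn
    _ = ns s := by simp

theorem isBlockWeight_of_weakOrder (hS : ∀ s, S s = ∑ i : Fin t, if i < s then ns i else 0)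
    (hb : IsBlockMap S ns b)
    {w : (Fin n → F) → ℕ}
    (hw : ∀ x : Fin n → F, x ≠ 0 → ∀ s : Fin t,
      (∀ l : Fin n, x l ≠ 0 → (l : ℕ) < S s + ns s) →
      (∃ l : Fin n, x l ≠ 0 ∧ S s ≤ (l : ℕ)) →
      w x = S s + (Finset.univ.filter fun l : Fin n =>
        x l ≠ 0 ∧ S s ≤ (l : ℕ) ∧ (l : ℕ) < S s + ns s).card) :
    IsBlockWeight b S w where
  offset_add_card_le s s' h := by
    have := start_add_le_start hS h
    have := card_block_le hb s
    omega
  eq_of_isTopBlock x s := fun ⟨hle, l, hl, hls⟩ => by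
    rw [hw x (fun h => hl (by simp [h])) s (fun l hl => (hb l s).2.2 (hle l hl))
      ⟨l, hl, (hb l s).1.2 hls.ge⟩]
    simp only [mem_block_iff hb]

theorem isBlockWeight_of_dualWeakOrder
    (hb : IsBlockMap S ns b)
    {wd : (Fin n → F) → ℕ}
    (hwd : ∀ x : Fin n → F, x ≠ 0 → ∀ s : Fin t,
      (∀ l : Fin n, x l ≠ 0 → S s ≤ (l : ℕ)) →
      (∃ l : Fin n, x l ≠ 0 ∧ (l : ℕ) < S s + ns s) →
      wd x = (∑ j : Fin t, if s < j then ns j else 0) +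
        (Finset.univ.filter fun l : Fin n =>
          x l ≠ 0 ∧ S s ≤ (l : ℕ) ∧ (l : ℕ) < S s + ns s).card) :
    IsBlockWeight (toDual ∘ b) (fun s => ∑ j : Fin t, if ofDual s < j then ns j else 0) wd where
  offset_add_card_le s s' h :=
    (Nat.add_le_add_left (card_block_le hb (ofDual s)) _).trans
      (sum_ite_lt_add_le_sum_ite_lt (ns ∘ ofDual) h)
  eq_of_isTopBlock x s := fun ⟨hge, l, hl, hls⟩ => by
    rw [hwd x (fun h => hl (by simp [h])) (ofDual s) (fun l hl => (hb l _).1.2 (hge l hl))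
      ⟨l, hl, (hb l _).2.2 (congrArg ofDual hls).le⟩]
    simp only [mem_block_iff hb, Function.comp_apply]
    rfl

end WeakOrder

end

theorem stmt18_general {F : Type*} [Field F] [DecidableEq F]
    (t : ℕ) (ns : Fin t → ℕ)
    (n : ℕ) (hn : n = ∑ s, ns s)
    (S : Fin t → ℕ)
    (hS : ∀ s, S s = ∑ i : Fin t, if i < s then ns i else 0)
    (w : (Fin n → F) → ℕ)
    (hw : ∀ x : Fin n → F, x ≠ 0 → ∀ s : Fin t,
      (∀ l : Fin n, x l ≠ 0 → (l : ℕ) < S s + ns s) →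
      (∃ l : Fin n, x l ≠ 0 ∧ S s ≤ (l : ℕ)) →
      w x = S s + (Finset.univ.filter fun l : Fin n =>
        x l ≠ 0 ∧ S s ≤ (l : ℕ) ∧ (l : ℕ) < S s + ns s).card)
    (wd : (Fin n → F) → ℕ)
    (hwd : ∀ x : Fin n → F, x ≠ 0 → ∀ s : Fin t,
      (∀ l : Fin n, x l ≠ 0 → S s ≤ (l : ℕ)) →
      (∃ l : Fin n, x l ≠ 0 ∧ (l : ℕ) < S s + ns s) →
      wd x = (∑ j : Fin t, if s < j then ns j else 0) +
        (Finset.univ.filter fun l : Fin n =>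
          x l ≠ 0 ∧ S s ≤ (l : ℕ) ∧ (l : ℕ) < S s + ns s).card)
    (g : (Fin n → F) ≃ₗ[F] (Fin n → F))
    (hg : ∀ u : Fin n → F, w (g u) = w u)
    (gt : (Fin n → F) →ₗ[F] (Fin n → F))
    (hgt : ∀ x y : Fin n → F, ∑ i, g x i * y i = ∑ i, x i * gt y i) :
    Function.Bijective gt ∧ ∀ u : Fin n → F, wd (gt u) = wd u := by
  obtain ⟨b, hb⟩ := exists_isBlockMap hS hn
  set A := LinearMap.toMatrix' (g : (Fin n → F) →ₗ[F] Fin n → F)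
  have hgA : A.mulVec = g := funext (LinearMap.toMatrix'_mulVec _)
  have hgtA : A.transpose.mulVec = gt := funext (transpose_toMatrix'_mulVec hgt)
  have hA : IsBlockMonomial b A :=
    isBlockMonomial_of_weight_mulVec (isBlockWeight_of_weakOrder hS hb hw)
      (hgA ▸ g.injective) (hgA ▸ hg)
  have hAt : IsUnit A.transpose :=
    (Matrix.isUnit_transpose A).2 (Matrix.mulVec_surjective_iff_isUnit.1 (hgA ▸ g.surjective))
  refine ⟨hgtA ▸ ⟨Matrix.mulVec_injective_iff_isUnit.2 hAt,
    Matrix.mulVec_surjective_iff_isUnit.2 hAt⟩, fun u => ?_⟩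
  rw [← hgtA, hA.transpose.weight_mulVec (isBlockWeight_of_dualWeakOrder hb hwd)]

/-- With blocks of `[n]` as in the weak order poset `P₀` given by
sizes `(n_1, …, n_t)` (block `s` is `[S s, S s + n_s)` with `S s = n_1 + ⋯ + n_{s-1}`),
`w` is the weak-order-poset weight of `P₀` (top nonzero block counts) and `wd` the
weight of the dual poset `P̌₀` with reversed block sizes: for `x ≠ 0` with bottom
nonzero block `s`, `wd x = (n_{s+1} + ⋯ + n_t) + (Hamming weight of x in block s)`.
If the linear automorphism `g` preserves `w`, then its transpose `ǧ` (characterized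
by `g x · y = x · ǧ y` for the standard bilinear form) is a linear automorphism
preserving `wd`. -/
theorem stmt18 {F : Type*} [Field F] [Fintype F] [DecidableEq F]
    (t : ℕ) (ns : Fin t → ℕ) (hpos : ∀ s, 0 < ns s)
    (n : ℕ) (hn : n = ∑ s, ns s)
    (S : Fin t → ℕ)
    (hS : ∀ s, S s = ∑ i : Fin t, if i < s then ns i else 0)
    (w : (Fin n → F) → ℕ)
    (hw0 : w 0 = 0)
    (hw : ∀ x : Fin n → F, x ≠ 0 → ∀ s : Fin t,
      (∀ l : Fin n, x l ≠ 0 → (l : ℕ) < S s + ns s) →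
      (∃ l : Fin n, x l ≠ 0 ∧ S s ≤ (l : ℕ)) →
      w x = S s + (Finset.univ.filter fun l : Fin n =>
        x l ≠ 0 ∧ S s ≤ (l : ℕ) ∧ (l : ℕ) < S s + ns s).card)
    (wd : (Fin n → F) → ℕ)
    (hwd0 : wd 0 = 0)
    (hwd : ∀ x : Fin n → F, x ≠ 0 → ∀ s : Fin t,
      (∀ l : Fin n, x l ≠ 0 → S s ≤ (l : ℕ)) →
      (∃ l : Fin n, x l ≠ 0 ∧ (l : ℕ) < S s + ns s) →
      wd x = (∑ j : Fin t, if s < j then ns j else 0) +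
        (Finset.univ.filter fun l : Fin n =>
          x l ≠ 0 ∧ S s ≤ (l : ℕ) ∧ (l : ℕ) < S s + ns s).card)
    (g : (Fin n → F) ≃ₗ[F] (Fin n → F))
    (hg : ∀ u : Fin n → F, w (g u) = w u)
    (gt : (Fin n → F) →ₗ[F] (Fin n → F))
    (hgt : ∀ x y : Fin n → F, ∑ i, g x i * y i = ∑ i, x i * gt y i) :
    Function.Bijective gt ∧ ∀ u : Fin n → F, wd (gt u) = wd u :=
  stmt18_general t ns n hn S hS w hw wd hwd g hg gt hgt
end

section
/- Let F_q be a finite field, n_1, …, n_t positive integers, n = n_1 + ⋯ + n_t, and let w_{P₀} be the weak-order-poset weight on F_q^n associated to the block sizes (n_1, …, n_t). Then the group G = Aut(F_q^n, w_{P₀}) of linear automorphisms of F_q^n preserving w_{P₀} acts transitively on each sphere: for all x, y ∈ F_q^n, w_{P₀}(x) = w_{P₀}(y) if and only if there exists g ∈ G with g(x) = y. Hence the G-orbits on F_q^n are exactly the sets O_i = {x ∈ F_q^n : w_{P₀}(x) = i}, i = 0, 1, …, n. -/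
/-!
The weight of a nonzero vector is `S_s + c`, where `s` is its top nonzero block and `c` the
number of its nonzero coordinates in that block; as `0 < c ≤ n_s`, the weight determines both.
Conversely, let `x` and `y` share `s` and `c`. A monomial map (a permutation of the coordinates of
block `s`, then a diagonal scaling) carries `x` to a vector agreeing with `y` from block `s`
upward, and a transvection adding multiples of a nonzero block-`s` coordinate to the lower
coordinates finishes the job. Both preserve the weight, which only sees the supports of the
coordinates from the top block upward.
-/

open Finset

theorem Equiv.Perm.exists_apply_mem_iff_of_card_eq {α : Type*} [Fintype α] [DecidableEq α]
    {A B : Finset α} (h : #A = #B) : ∃ σ : Equiv.Perm α, ∀ a, σ a ∈ B ↔ a ∈ A := by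
  let e : {a // a ∈ A} ≃ {a // a ∈ B} := Fintype.equivOfCardEq (by simpa using h)
  refine ⟨e.extendSubtype, fun a => ⟨fun ha => ?_, e.extendSubtype_mem a⟩⟩
  by_contra ha'
  exact e.extendSubtype_not_mem a ha' ha

namespace WeakOrder

section Blocks

variable {t : ℕ} (ns : Fin t → ℕ)

-- Blocks are indexed from `0`: block `s` is the paper's block `s + 1`, and
-- `blockStart ns s = n_1 + ⋯ + n_s` is the index of its first coordinate.
def blockStart (s : Fin t) : ℕ := ∑ i : Fin t, if i < s then ns i else 0

def InBlock (s : Fin t) (l : ℕ) : Prop := blockStart ns s ≤ l ∧ l < blockStart ns s + ns s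

instance (s : Fin t) : DecidablePred (InBlock ns s) := fun _ => instDecidableAnd

variable {ns}

theorem blockStart_add_self (s : Fin t) :
    blockStart ns s + ns s = ∑ i : Fin t, if i ≤ s then ns i else 0 := by
  rw [blockStart, ← Fintype.sum_ite_eq' s ns, ← sum_add_distrib]
  refine sum_congr rfl fun i _ => ?_
  rcases lt_trichotomy i s with h | rfl | h
  · simp [h, h.le, h.ne]
  · simp
  · simp [h.not_gt, h.not_ge, h.ne']

theorem blockStart_mono : Monotone (blockStart ns) := fun s₁ s₂ h =>
  sum_le_sum fun i _ => by
    split_ifs with h₁ h₂ <;> first | rfl | positivity | exact absurd (h₁.trans_le h) h₂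

theorem blockStart_add_le_of_lt {s₁ s₂ : Fin t} (h : s₁ < s₂) :
    blockStart ns s₁ + ns s₁ ≤ blockStart ns s₂ := by
  rw [blockStart_add_self]
  exact sum_le_sum fun i _ => by
    split_ifs with h₁ h₂ <;> first | rfl | positivity | exact absurd (h₁.trans_lt h) h₂

theorem blockStart_succ {k : ℕ} {ns : Fin (k + 1) → ℕ} (p : Fin k) :
    blockStart ns p.succ = blockStart ns p.castSucc + ns p.castSucc := by
  rw [blockStart_add_self, blockStart]
  simp only [Fin.le_castSucc_iff]

theorem exists_inBlock {l : ℕ} (hl : l < ∑ s, ns s) : ∃ s, InBlock ns s l := by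
  obtain ⟨k, rfl⟩ : ∃ k, t = k + 1 := Nat.exists_eq_succ_of_ne_zero (by rintro rfl; simp at hl)
  set T := univ.filter fun s => l < blockStart ns s + ns s
  have hne : T.Nonempty := ⟨Fin.last k, by simpa [T, blockStart_add_self, Fin.le_last] using hl⟩
  refine ⟨T.min' hne, ?_, (mem_filter.1 (T.min'_mem hne)).2⟩
  rcases Fin.eq_zero_or_eq_succ (T.min' hne) with hs | ⟨p, hp⟩
  · simp [hs, blockStart]
  · rw [hp, blockStart_succ]
    by_contra! h
    have := T.min'_le p.castSucc (mem_filter.2 ⟨mem_univ _, h⟩)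
    exact (hp ▸ Fin.castSucc_lt_succ).not_ge this

theorem InBlock.le_iff_and_lt_iff {s s' : Fin t} {l l' : ℕ} (hl : InBlock ns s l)
    (hl' : InBlock ns s l') :
    (blockStart ns s' ≤ l ↔ blockStart ns s' ≤ l') ∧
      (l < blockStart ns s' + ns s' ↔ l' < blockStart ns s' + ns s') := by
  obtain ⟨h₁, h₂⟩ := hl
  obtain ⟨h₃, h₄⟩ := hl'
  rcases lt_trichotomy s' s with h | rfl | h
  · have := blockStart_add_le_of_lt (ns := ns) h
    omega
  · omega
  · have := blockStart_add_le_of_lt (ns := ns) h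
    omega

end Blocks

section Weight

variable {t n : ℕ} {ns : Fin t → ℕ} {M : Type*} [Zero M]

def IsTopBlock (ns : Fin t → ℕ) (u : Fin n → M) (s : Fin t) : Prop :=
  (∀ l : Fin n, u l ≠ 0 → (l : ℕ) < blockStart ns s + ns s) ∧
    ∃ l : Fin n, u l ≠ 0 ∧ blockStart ns s ≤ l

def blockSupport [DecidableEq M] (ns : Fin t → ℕ) (u : Fin n → M) (s : Fin t) : Finset (Fin n) :=
  univ.filter fun l => u l ≠ 0 ∧ InBlock ns s l

def PreservesBlocks (ns : Fin t → ℕ) (τ : Equiv.Perm (Fin n)) : Prop :=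
  ∀ (s : Fin t) (l : Fin n), (blockStart ns s ≤ τ l ↔ blockStart ns s ≤ l) ∧
    ((τ l : ℕ) < blockStart ns s + ns s ↔ (l : ℕ) < blockStart ns s + ns s)

structure IsWeakOrderWeight [DecidableEq M] (ns : Fin t → ℕ) (w : (Fin n → M) → ℕ) : Prop where
  map_zero : w 0 = 0
  eq_of_isTopBlock : ∀ u s, IsTopBlock ns u s → w u = blockStart ns s + #(blockSupport ns u s)

theorem IsTopBlock.ne_zero {u : Fin n → M} {s : Fin t} (h : IsTopBlock ns u s) : u ≠ 0 := by
  obtain ⟨l, hl, -⟩ := h.2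
  rintro rfl
  exact hl rfl

theorem exists_isTopBlock (hn : n = ∑ s, ns s) {u : Fin n → M} (hu : u ≠ 0) :
    ∃ s, IsTopBlock ns u s := by
  classical
  obtain ⟨m, hm, hmax⟩ := (univ.filter fun l => u l ≠ 0).exists_max_image (fun l => (l : ℕ))
    (by simpa [Finset.Nonempty, Function.ne_iff] using hu)
  obtain ⟨s, hs⟩ := exists_inBlock (ns := ns) (l := m) (by omega)
  exact ⟨s, fun l hl => (hmax l (by simpa using hl)).trans_lt hs.2, m, (mem_filter.1 hm).2, hs.1⟩

variable [DecidableEq M]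

@[simp]
theorem mem_blockSupport {u : Fin n → M} {s : Fin t} {l : Fin n} :
    l ∈ blockSupport ns u s ↔ u l ≠ 0 ∧ InBlock ns s l := by
  simp [blockSupport]

theorem card_blockSupport_le (u : Fin n → M) (s : Fin t) : #(blockSupport ns u s) ≤ ns s :=
  calc #(blockSupport ns u s) ≤ #(Ico (blockStart ns s) (blockStart ns s + ns s)) :=
        card_le_card_of_injOn (↑) (fun l hl => by simpa [InBlock] using (mem_filter.1 hl).2.2)
          Fin.val_injective.injOn
    _ = ns s := by simp

theorem IsTopBlock.card_blockSupport_pos {u : Fin n → M} {s : Fin t} (h : IsTopBlock ns u s) :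
    0 < #(blockSupport ns u s) := by
  obtain ⟨l, hl, hs⟩ := h.2
  exact card_pos.2 ⟨l, mem_filter.2 ⟨mem_univ _, hl, hs, h.1 l hl⟩⟩

theorem IsTopBlock.of_eq_of_le {u v : Fin n → M} {s : Fin t} (hu : IsTopBlock ns u s)
    (h : ∀ l : Fin n, blockStart ns s ≤ l → u l = v l) :
    IsTopBlock ns v s ∧ #(blockSupport ns v s) = #(blockSupport ns u s) := by
  refine ⟨⟨fun l hl => ?_, ?_⟩, ?_⟩
  · by_cases hls : blockStart ns s ≤ l
    · exact hu.1 l (by rwa [h l hls])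
    · omega
  · obtain ⟨l, hl, hls⟩ := hu.2
    exact ⟨l, by rwa [← h l hls], hls⟩
  · exact congrArg card (filter_congr fun l _ => and_congr_left fun hl => by rw [h l hl.1])

theorem IsTopBlock.of_perm {u v : Fin n → M} {s : Fin t} (hu : IsTopBlock ns u s)
    {τ : Equiv.Perm (Fin n)} (hτ : PreservesBlocks ns τ) (h : ∀ l, v l ≠ 0 ↔ u (τ l) ≠ 0) :
    IsTopBlock ns v s ∧ #(blockSupport ns v s) = #(blockSupport ns u s) := by
  refine ⟨⟨fun l hl => (hτ s l).2.1 (hu.1 _ ((h l).1 hl)), ?_⟩, ?_⟩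
  · obtain ⟨l, hl, hls⟩ := hu.2
    exact ⟨τ.symm l, (h _).2 (by simpa using hl), (hτ s _).1.1 (by simpa using hls)⟩
  · have hmem : ∀ l, τ l ∈ blockSupport ns u s ↔ l ∈ blockSupport ns v s := fun l => by
      simp only [mem_blockSupport, InBlock, h l, (hτ s l).1, (hτ s l).2]
    exact card_nbij' τ τ.symm (fun l hl => (hmem l).2 hl)
      (fun l hl => (hmem _).1 (by simpa using hl)) (fun l _ => by simp) (fun l _ => by simp)

theorem exists_perm_preservesBlocks {x y : Fin n → M} {s : Fin t}
    (h : #(blockSupport ns x s) = #(blockSupport ns y s)) :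
    ∃ τ : Equiv.Perm (Fin n), PreservesBlocks ns τ ∧
      (∀ l : Fin n, InBlock ns s l → (x (τ l) ≠ 0 ↔ y l ≠ 0)) ∧
      ∀ l : Fin n, ¬InBlock ns s l → τ l = l := by
  have hcard : ∀ u : Fin n → M,
      #((blockSupport ns u s).subtype fun l : Fin n => InBlock ns s l) =
      #(blockSupport ns u s) := fun u => by
    rw [card_subtype, filter_true_of_mem fun l hl => (mem_blockSupport.1 hl).2]
  obtain ⟨σ, hσ⟩ := Equiv.Perm.exists_apply_mem_iff_of_card_eq
    ((hcard y).trans ((hcard x).trans h).symm)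
  refine ⟨Equiv.Perm.ofSubtype σ, fun s' l => ?_, fun l hl => ?_,
    fun l hl => Equiv.Perm.ofSubtype_apply_of_not_mem σ hl⟩
  · by_cases hl : InBlock ns s l
    · rw [Equiv.Perm.ofSubtype_apply_of_mem σ hl]
      exact ((σ ⟨l, hl⟩).2.le_iff_and_lt_iff hl)
    · rw [Equiv.Perm.ofSubtype_apply_of_not_mem σ hl]
      exact ⟨Iff.rfl, Iff.rfl⟩
  · rw [Equiv.Perm.ofSubtype_apply_of_mem σ hl]
    simpa [(σ ⟨l, hl⟩).2, hl] using hσ ⟨l, hl⟩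

namespace IsWeakOrderWeight

variable {w : (Fin n → M) → ℕ}

theorem eq_zero_iff (hw : IsWeakOrderWeight ns w) (hn : n = ∑ s, ns s) {u : Fin n → M} :
    w u = 0 ↔ u = 0 := by
  refine ⟨fun h => by_contra fun hu => ?_, fun h => h ▸ hw.map_zero⟩
  obtain ⟨s, hs⟩ := exists_isTopBlock hn hu
  have := hs.card_blockSupport_pos
  rw [hw.eq_of_isTopBlock u s hs] at h
  omega

theorem eq_and_card_eq_of_eq (hw : IsWeakOrderWeight ns w) {u v : Fin n → M} {s s' : Fin t}
    (hu : IsTopBlock ns u s) (hv : IsTopBlock ns v s') (h : w u = w v) :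
    s = s' ∧ #(blockSupport ns u s) = #(blockSupport ns v s) := by
  rw [hw.eq_of_isTopBlock u s hu, hw.eq_of_isTopBlock v s' hv] at h
  have := hu.card_blockSupport_pos
  have := hv.card_blockSupport_pos
  have := card_blockSupport_le (ns := ns) u s
  have := card_blockSupport_le (ns := ns) v s'
  obtain rfl : s = s' := by
    rcases lt_trichotomy s s' with hss | rfl | hss
    · have := blockStart_add_le_of_lt (ns := ns) hss
      omega
    · rfl
    · have := blockStart_add_le_of_lt (ns := ns) hss
      omega
  exact ⟨rfl, by omega⟩

theorem apply_eq_of_forall_isTopBlock (hw : IsWeakOrderWeight ns w) (hn : n = ∑ s, ns s)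
    {g : (Fin n → M) → Fin n → M} (hg₀ : g 0 = 0)
    (hg : ∀ u s, IsTopBlock ns u s →
      IsTopBlock ns (g u) s ∧ #(blockSupport ns (g u) s) = #(blockSupport ns u s))
    (u : Fin n → M) : w (g u) = w u := by
  rcases eq_or_ne u 0 with rfl | hu
  · rw [hg₀]
  obtain ⟨s, hs⟩ := exists_isTopBlock hn hu
  obtain ⟨hgs, hcard⟩ := hg u s hs
  rw [hw.eq_of_isTopBlock _ s hgs, hw.eq_of_isTopBlock u s hs, hcard]

end IsWeakOrderWeight

end Weight

section Automorphisms

variable {t n : ℕ} {ns : Fin t → ℕ} {F : Type*} [Field F] [DecidableEq F]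
  {w : (Fin n → F) → ℕ}

namespace IsWeakOrderWeight

theorem exists_monomial_eq_of_le (hw : IsWeakOrderWeight ns w) (hn : n = ∑ s, ns s)
    {x y : Fin n → F} {s : Fin t} (hx : IsTopBlock ns x s) (hy : IsTopBlock ns y s)
    (h : #(blockSupport ns x s) = #(blockSupport ns y s)) :
    ∃ g : (Fin n → F) ≃ₗ[F] (Fin n → F),
      (∀ u, w (g u) = w u) ∧ ∀ l : Fin n, blockStart ns s ≤ l → g x l = y l := by
  obtain ⟨τ, hτ, hblock, hfix⟩ := exists_perm_preservesBlocks h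
  have hsupp : ∀ l : Fin n, blockStart ns s ≤ l → (x (τ l) ≠ 0 ↔ y l ≠ 0) := fun l hl => by
    by_cases hb : InBlock ns s l
    · exact hblock l hb
    · have hl' : blockStart ns s + ns s ≤ l := by unfold InBlock at hb; omega
      rw [hfix l hb]
      exact iff_of_false (fun h => by have := hx.1 l h; omega)
        (fun h => by have := hy.1 l h; omega)
  -- Scaling by `1` where the supports differ (possible only below block `s`) keeps `d l ≠ 0`.
  let d : Fin n → F := fun l => if x (τ l) ≠ 0 ∧ y l ≠ 0 then y l / x (τ l) else 1
  have hd : ∀ l, d l ≠ 0 := fun l => by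
    unfold d
    split_ifs with hl
    exacts [div_ne_zero hl.2 hl.1, one_ne_zero]
  let g := (LinearEquiv.funCongrLeft F F τ).trans
    (LinearEquiv.piCongrRight fun l => LinearEquiv.smulOfNeZero F F (d l) (hd l))
  have hg : ∀ u l, g u l = d l * u (τ l) := fun _ _ => rfl
  refine ⟨g, hw.apply_eq_of_forall_isTopBlock hn g.map_zero fun u s' hu =>
    hu.of_perm hτ fun l => ?_, fun l hl => ?_⟩
  · simp [hg, hd l]
  · rw [hg]
    by_cases hxl : x (τ l) = 0
    · have hyl : y l = 0 := not_ne_iff.1 fun hyl => (hsupp l hl).2 hyl hxl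
      rw [hxl, hyl, mul_zero]
    · simp [d, hxl, (hsupp l hl).1 hxl]

theorem exists_transvection_eq (hw : IsWeakOrderWeight ns w) (hn : n = ∑ s, ns s)
    {x y : Fin n → F} {s : Fin t} (hx : IsTopBlock ns x s)
    (h : ∀ l : Fin n, blockStart ns s ≤ l → x l = y l) :
    ∃ g : (Fin n → F) ≃ₗ[F] (Fin n → F), (∀ u, w (g u) = w u) ∧ g x = y := by
  obtain ⟨k, hk, hks⟩ := hx.2
  let c : Fin n → F := fun l => if (l : ℕ) < blockStart ns s then (y l - x l) / x k else 0
  have hck : LinearMap.proj (R := F) k c = 0 := if_neg (not_lt.2 hks)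
  let g := LinearEquiv.transvection hck
  have hg : ∀ u l, g u l = u l + u k * c l := fun _ _ => rfl
  refine ⟨g, hw.apply_eq_of_forall_isTopBlock hn g.map_zero fun u s' hu => ?_,
    funext fun l => ?_⟩
  · rcases lt_or_ge s' s with hs | hs
    · have huk : u k = 0 := by
        by_contra huk
        have := hu.1 k huk
        have := blockStart_add_le_of_lt (ns := ns) hs
        omega
      have hgu : g u = u := funext fun l => by rw [hg, huk, zero_mul, add_zero]
      rw [hgu]
      exact ⟨hu, rfl⟩
    · refine hu.of_eq_of_le fun l hl => ?_
      have : ¬(l : ℕ) < blockStart ns s := not_lt.2 ((blockStart_mono hs).trans hl)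
      simp [hg, c, this]
  · rw [hg]
    by_cases hl : (l : ℕ) < blockStart ns s
    · simp only [c, if_pos hl]
      field_simp
      ring
    · simp [c, hl, h l (not_lt.1 hl)]

theorem exists_equiv_of_isTopBlock (hw : IsWeakOrderWeight ns w) (hn : n = ∑ s, ns s)
    {x y : Fin n → F} {s : Fin t} (hx : IsTopBlock ns x s) (hy : IsTopBlock ns y s)
    (h : #(blockSupport ns x s) = #(blockSupport ns y s)) :
    ∃ g : (Fin n → F) ≃ₗ[F] (Fin n → F), (∀ u, w (g u) = w u) ∧ g x = y := by
  obtain ⟨g₁, hg₁, hg₁x⟩ := hw.exists_monomial_eq_of_le hn hx hy h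
  have hy' : ∀ l : Fin n, blockStart ns s ≤ l → y l = g₁ x l := fun l hl => (hg₁x l hl).symm
  obtain ⟨g₂, hg₂, hg₂x⟩ := hw.exists_transvection_eq hn (hy.of_eq_of_le hy').1 hg₁x
  exact ⟨g₁.trans g₂, fun u => (hg₂ _).trans (hg₁ u), hg₂x⟩

end IsWeakOrderWeight

end Automorphisms

end WeakOrder

open WeakOrder

theorem stmt19_general {F : Type*} [Field F] [DecidableEq F]
    (t : ℕ) (ns : Fin t → ℕ)
    (n : ℕ) (hn : n = ∑ s, ns s)
    (S : Fin t → ℕ)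
    (hS : ∀ s, S s = ∑ i : Fin t, if i < s then ns i else 0)
    (w : (Fin n → F) → ℕ)
    (hw0 : w 0 = 0)
    (hw : ∀ x : Fin n → F, x ≠ 0 → ∀ s : Fin t,
      (∀ l : Fin n, x l ≠ 0 → (l : ℕ) < S s + ns s) →
      (∃ l : Fin n, x l ≠ 0 ∧ S s ≤ (l : ℕ)) →
      w x = S s + (Finset.univ.filter fun l : Fin n =>
        x l ≠ 0 ∧ S s ≤ (l : ℕ) ∧ (l : ℕ) < S s + ns s).card) :
    ∀ x y : Fin n → F, w x = w y ↔
      ∃ g : (Fin n → F) ≃ₗ[F] (Fin n → F),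
        (∀ u : Fin n → F, w (g u) = w u) ∧ g x = y := by
  obtain rfl : S = blockStart ns := funext hS
  have hw' : IsWeakOrderWeight ns w := ⟨hw0, fun u s hu => hw u hu.ne_zero s hu.1 hu.2⟩
  intro x y
  refine ⟨fun hxy => ?_, fun ⟨g, hg, hgx⟩ => hgx ▸ (hg x).symm⟩
  rcases eq_or_ne x 0 with rfl | hx
  · obtain rfl : y = 0 := (hw'.eq_zero_iff hn).1 (hxy.symm.trans hw0)
    exact ⟨LinearEquiv.refl F _, fun _ => rfl, rfl⟩
  have hy : y ≠ 0 := by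
    rintro rfl
    exact hx ((hw'.eq_zero_iff hn).1 (hxy.trans hw0))
  obtain ⟨s, hxs⟩ := exists_isTopBlock hn hx
  obtain ⟨s', hys⟩ := exists_isTopBlock hn hy
  obtain ⟨rfl, hcard⟩ := hw'.eq_and_card_eq_of_eq hxs hys hxy
  exact hw'.exists_equiv_of_isTopBlock hn hxs hys hcard

/-- With the weak-order-poset weight `w` on `F_q^n` given by block
sizes `(n_1, …, n_t)` (characterized via `S s = n_1 + ⋯ + n_{s-1}` and the top
nonzero block, as in Statement 17), the group of `w`-preserving linear
automorphisms acts transitively on each sphere: `w x = w y` iff some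
`w`-preserving linear automorphism `g` has `g x = y`. Hence the orbits are
exactly the spheres `O_i = {x : w x = i}`. -/
theorem stmt19 {F : Type*} [Field F] [Fintype F] [DecidableEq F]
    (t : ℕ) (ns : Fin t → ℕ) (hpos : ∀ s, 0 < ns s)
    (n : ℕ) (hn : n = ∑ s, ns s)
    (S : Fin t → ℕ)
    (hS : ∀ s, S s = ∑ i : Fin t, if i < s then ns i else 0)
    (w : (Fin n → F) → ℕ)
    (hw0 : w 0 = 0)
    (hw : ∀ x : Fin n → F, x ≠ 0 → ∀ s : Fin t,
      (∀ l : Fin n, x l ≠ 0 → (l : ℕ) < S s + ns s) →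
      (∃ l : Fin n, x l ≠ 0 ∧ S s ≤ (l : ℕ)) →
      w x = S s + (Finset.univ.filter fun l : Fin n =>
        x l ≠ 0 ∧ S s ≤ (l : ℕ) ∧ (l : ℕ) < S s + ns s).card) :
    ∀ x y : Fin n → F, w x = w y ↔
      ∃ g : (Fin n → F) ≃ₗ[F] (Fin n → F),
        (∀ u : Fin n → F, w (g u) = w u) ∧ g x = y :=
  stmt19_general t ns n hn S hS w hw0 hw
end
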